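/- arXiv:1710.10867 — 5 statements merged into one kernel-verified Lean document; each statement's English description precedes it below -/
import Mathlib

section
/- Let X be an invertible k-nonnegative n×n real matrix with k ≥ 2, and suppose X_{i,j} = 0 for some indices i, j. Then: (1) i ≠ j; (2) if i < j, then X_{i',j'} = 0 for all i' ≤ i and j' ≥ j; (3) if i > j, then X_{i',j'} = 0 for all i' ≥ i and j' ≤ j. -/
open Matrix

/-- A square real matrix is `k`-nonnegative if every minor of order at most `k`
(indexed by strictly increasing row and column selections) is nonnegative. -/
def IsKNonneg {n : ℕ} (k : ℕ) (X : Matrix (Fin n) (Fin n) ℝ) : Prop :=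
  ∀ m : ℕ, m ≤ k → ∀ I J : Fin m → Fin n, StrictMono I → StrictMono J →
    0 ≤ (X.submatrix I J).det

/-! Only minors of order 1 and 2 matter. If a 2×2 minor with nonnegative entries has a zero on
its diagonal, it also has a zero on its antidiagonal, so a zero propagates along any row or column
where the matrix is nonzero. For a zero at `(i, j)` with `i ≤ j` this produces the shadow, unless
the zeros fill the block of rows `≥ i` and columns `≤ j`; that block, like the shadow of a
diagonal zero, meets every term of the Leibniz expansion, contradicting nonsingularity. -/

theorem Equiv.Perm.exists_le_and_apply_le {n : ℕ} (σ : Equiv.Perm (Fin n)) (i : Fin n) :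
    ∃ b, i ≤ b ∧ σ b ≤ i := by
  by_contra! h
  have hcard : (Finset.Ici i).card ≤ (Finset.Ioi i).card :=
    Finset.card_le_card_of_injOn σ (fun b hb => by simpa using h b (by simpa using hb))
      σ.injective.injOn
  simp only [Fin.card_Ici, Fin.card_Ioi] at hcard
  omega

theorem Matrix.det_eq_zero_of_forall_le_le {R : Type*} [CommRing R] {n : ℕ}
    (M : Matrix (Fin n) (Fin n) R) (i : Fin n) (h : ∀ a b, a ≤ i → i ≤ b → M a b = 0) :
    M.det = 0 := by
  rw [det_apply]
  refine Finset.sum_eq_zero fun σ _ => ?_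
  obtain ⟨b, hib, hσb⟩ := σ.exists_le_and_apply_le i
  rw [Finset.prod_eq_zero (f := fun c => M (σ c) c) (Finset.mem_univ b) (h _ _ hσb hib), smul_zero]

namespace IsKNonneg

variable {n k : ℕ} {X : Matrix (Fin n) (Fin n) ℝ}

theorem mono {l : ℕ} (hX : IsKNonneg k X) (hlk : l ≤ k) : IsKNonneg l X :=
  fun m hm => hX m (hm.trans hlk)

theorem transpose (hX : IsKNonneg k X) : IsKNonneg k Xᵀ := by
  intro m hm I J hI hJ
  rw [← transpose_submatrix, det_transpose]
  exact hX m hm J I hJ hI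

theorem entry_nonneg (hX : IsKNonneg k X) (hk : 1 ≤ k) (a b : Fin n) : 0 ≤ X a b := by
  simpa using hX 1 hk (fun _ => a) (fun _ => b) (Subsingleton.strictMono _)
    (Subsingleton.strictMono _)

theorem antidiag_le_diag (hX : IsKNonneg k X) (hk : 2 ≤ k) {a b c d : Fin n} (hab : a < b)
    (hcd : c < d) : X a d * X b c ≤ X a c * X b d := by
  have h := hX 2 hk ![a, b] ![c, d] (by simpa [Fin.strictMono_iff_lt_succ] using hab)
    (by simpa [Fin.strictMono_iff_lt_succ] using hcd)
  rw [det_fin_two] at h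
  simp only [submatrix_apply, cons_val_zero, cons_val_one] at h
  linarith

theorem antidiag_eq_zero (hX : IsKNonneg 2 X) {a b c d : Fin n} (hab : a < b) (hcd : c < d)
    (hz : X a c = 0 ∨ X b d = 0) : X a d = 0 ∨ X b c = 0 := by
  have hdiag : X a c * X b d = 0 := by rcases hz with h | h <;> simp [h]
  refine mul_eq_zero.mp (le_antisymm ?_ ?_)
  · exact hdiag ▸ hX.antidiag_le_diag le_rfl hab hcd
  · exact mul_nonneg (hX.entry_nonneg one_le_two a d) (hX.entry_nonneg one_le_two b c)

theorem exists_row_ne_zero (hdet : X.det ≠ 0) (i : Fin n) : ∃ c, X i c ≠ 0 :=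
  not_forall.mp fun h => hdet (det_eq_zero_of_row_eq_zero i h)

theorem exists_col_ne_zero (hdet : X.det ≠ 0) (j : Fin n) : ∃ r, X r j ≠ 0 :=
  not_forall.mp fun h => hdet (det_eq_zero_of_column_eq_zero j h)

theorem exists_lt_ne_zero_of_eq_zero (hX : IsKNonneg 2 X) (hdet : X.det ≠ 0) {i j : Fin n}
    (hij : i ≤ j) (h0 : X i j = 0) : ∃ r, i < r ∧ X r j ≠ 0 := by
  by_contra! hcol
  obtain ⟨s, hs⟩ := exists_col_ne_zero hdet j
  have hsi : s < i := lt_of_not_ge fun h =>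
    hs (h.eq_or_lt.elim (fun h => h ▸ h0) (hcol s))
  have hrow : ∀ c, c ≤ j → X i c = 0 := fun c hc => hc.eq_or_lt.elim (fun h => h ▸ h0)
    fun hc => (hX.antidiag_eq_zero hsi hc (Or.inr h0)).resolve_left hs
  obtain ⟨e, he⟩ := exists_row_ne_zero hdet i
  have hje : j < e := lt_of_not_ge fun h => he (hrow e h)
  have hblock : ∀ r c, i ≤ r → c ≤ j → X r c = 0 := fun r c hr hc =>
    hr.eq_or_lt.elim (fun h => h ▸ hrow c hc) fun hr =>
      (hX.antidiag_eq_zero hr (hc.trans_lt hje) (Or.inl (hrow c hc))).resolve_left he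
  refine hdet (det_transpose X ▸ Xᵀ.det_eq_zero_of_forall_le_le i fun c r hc hr => ?_)
  exact hblock r c hr (hc.trans hij)

theorem eq_zero_of_le_of_le (hX : IsKNonneg 2 X) (hdet : X.det ≠ 0) {i j : Fin n}
    (hij : i ≤ j) (h0 : X i j = 0) : ∀ a b, a ≤ i → j ≤ b → X a b = 0 := by
  obtain ⟨r, hir, hr⟩ := hX.exists_lt_ne_zero_of_eq_zero hdet hij h0
  have hrow : ∀ b, j ≤ b → X i b = 0 := fun b hb => hb.eq_or_lt.elim (fun h => h ▸ h0)
    fun hb => (hX.antidiag_eq_zero hir hb (Or.inl h0)).resolve_right hr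
  obtain ⟨c, hc⟩ := exists_row_ne_zero hdet i
  have hcj : c < j := lt_of_not_ge fun h => hc (hrow c h)
  intro a b ha hb
  exact ha.eq_or_lt.elim (fun h => h ▸ hrow b hb) fun ha =>
    (hX.antidiag_eq_zero ha (hcj.trans_le hb) (Or.inr (hrow b hb))).resolve_right hc

end IsKNonneg

theorem zero_shadow_general {n k : ℕ} (hk : 2 ≤ k)
    (X : Matrix (Fin n) (Fin n) ℝ) (hX : IsUnit X) (hXk : IsKNonneg k X)
    (i j : Fin n) (hij : X i j = 0) :
    i ≠ j ∧
    (i < j → ∀ i' j' : Fin n, i' ≤ i → j ≤ j' → X i' j' = 0) ∧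
    (j < i → ∀ i' j' : Fin n, i ≤ i' → j' ≤ j → X i' j' = 0) := by
  have hdet : X.det ≠ 0 := ((isUnit_iff_isUnit_det X).mp hX).ne_zero
  have hX2 : IsKNonneg 2 X := hXk.mono hk
  refine ⟨?_, fun hlt => hX2.eq_zero_of_le_of_le hdet hlt.le hij, ?_⟩
  · rintro rfl
    exact hdet (X.det_eq_zero_of_forall_le_le i (hX2.eq_zero_of_le_of_le hdet le_rfl hij))
  · intro hlt i' j' hi' hj'
    have hdetT : Xᵀ.det ≠ 0 := by rwa [det_transpose]
    exact hX2.transpose.eq_zero_of_le_of_le hdetT hlt.le hij j' i' hj' hi'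

/-- Zero entries of an invertible `k`-nonnegative matrix (`k ≥ 2`) cannot lie on the
diagonal, and cast a "shadow" to the northeast (if above the diagonal) or to the
southwest (if below the diagonal). -/
theorem zero_shadow {n k : ℕ} (hk : 2 ≤ k) (hkn : k ≤ n)
    (X : Matrix (Fin n) (Fin n) ℝ) (hX : IsUnit X) (hXk : IsKNonneg k X)
    (i j : Fin n) (hij : X i j = 0) :
    i ≠ j ∧
    (i < j → ∀ i' j' : Fin n, i' ≤ i → j ≤ j' → X i' j' = 0) ∧
    (j < i → ∀ i' j' : Fin n, i ≤ i' → j' ≤ j → X i' j' = 0) :=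
  zero_shadow_general hk X hX hXk i j hij
end

section
/- Let X be an n×n real matrix, 1 ≤ k ≤ n−1, and a a real number. (1) Let X' = X·e_k(a). For subsets I, J of {1,…,n} with |I| = |J|: if J contains k+1 but not k, then |X'_{I,J}| = |X_{I,J}| + a·|X_{I,(J∖{k+1})∪{k}}|; for all other pairs I, J one has |X'_{I,J}| = |X_{I,J}|. (2) Let X'' = e_k(a)·X. If I contains k but not k+1, then |X''_{I,J}| = |X_{I,J}| + a·|X_{(I∖{k})∪{k+1},J}|; for all other pairs I, J one has |X''_{I,J}| = |X_{I,J}|. -/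
/-!
`e_k(a)` is the transvection `1 + a E_{k,k+1}`. Multiplying by it on the right adds `a` times
column `k` to column `k+1`, so by linearity of the determinant in one column, a minor whose
columns contain `k+1` becomes the old minor plus `a` times the minor with column `k+1` replaced by
column `k`; the latter has two equal columns, hence vanishes, when `k` is also a column. The row
statement is the transpose of the column statement.
-/

open Matrix

/-- The Chevalley generator `e_i(a)` (0-based index `i`): the identity matrix with
entry `a` in position `(i, i+1)`.  `f_i(a)` is its transpose. -/
def chevE (n : ℕ) (i : ℕ) (a : ℝ) : Matrix (Fin n) (Fin n) ℝ :=
  fun p q => if (p : ℕ) = (q : ℕ) then 1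
    else if (p : ℕ) = i ∧ (q : ℕ) = i + 1 then a
    else 0

namespace Matrix

open Function

variable {R m n ι : Type*} [CommRing R]

theorem transpose_transvection [DecidableEq n] (i j : n) (c : R) :
    (transvection i j c)ᵀ = transvection j i c := by
  simp [transvection, transpose_single]

theorem submatrix_mul_transvection_of_forall_ne [Fintype n] [DecidableEq n] (M : Matrix m n R)
    (I : ι → m) {J : ι → n} {i j : n} (c : R) (hJ : ∀ t, J t ≠ j) :
    (M * transvection i j c).submatrix I J = M.submatrix I J := by
  ext s t
  simp [hJ t]

theorem submatrix_mul_transvection_eq_updateCol [Fintype n] [DecidableEq n] [DecidableEq ι]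
    (M : Matrix m n R) (I : ι → m) {J : ι → n} {i j : n} (c : R) (hJ : Injective J) {t₀ : ι}
    (ht₀ : J t₀ = j) :
    (M * transvection i j c).submatrix I J =
      (M.submatrix I J).updateCol t₀ ((fun s => M (I s) j) + c • fun s => M (I s) i) := by
  ext s t
  rcases eq_or_ne t t₀ with rfl | ht
  · simp [ht₀]
  · simp [ht, ht₀ ▸ hJ.ne ht]

theorem submatrix_replace_eq_updateCol {α : Type*} [DecidableEq n] [DecidableEq ι]
    (M : Matrix m n α) (I : ι → m) {J : ι → n} {i j : n} (hJ : Injective J) {t₀ : ι}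
    (ht₀ : J t₀ = j) :
    M.submatrix I (fun t => if J t = j then i else J t) =
      (M.submatrix I J).updateCol t₀ (fun s => M (I s) i) := by
  ext s t
  rcases eq_or_ne t t₀ with rfl | ht
  · simp [ht₀]
  · simp [ht, ht₀ ▸ hJ.ne ht]

theorem det_submatrix_replace_eq_zero [DecidableEq n] [Fintype ι] [DecidableEq ι]
    (M : Matrix m n R) (I : ι → m) {J : ι → n} {i j : n} (hij : i ≠ j) {t₀ t₁ : ι}
    (ht₀ : J t₀ = j) (ht₁ : J t₁ = i) :
    (M.submatrix I (fun t => if J t = j then i else J t)).det = 0 := by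
  have hne : t₀ ≠ t₁ := fun h => hij (ht₁ ▸ ht₀ ▸ congrArg J h.symm)
  exact det_zero_of_column_eq hne fun s => by simp [ht₀, ht₁, hij]

section Columns

variable [Fintype n] [DecidableEq n] [Fintype ι] [DecidableEq ι] (M : Matrix m n R) (I : ι → m)
  {J : ι → n} {i j : n} (c : R)

theorem det_submatrix_mul_transvection (hJ : Injective J) {t₀ : ι} (ht₀ : J t₀ = j) :
    ((M * transvection i j c).submatrix I J).det =
      (M.submatrix I J).det + c * (M.submatrix I (fun t => if J t = j then i else J t)).det := by
  have hcol : (fun s => M (I s) j) = fun s => M.submatrix I J s t₀ := by simp [ht₀]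
  rw [submatrix_mul_transvection_eq_updateCol M I c hJ ht₀,
    submatrix_replace_eq_updateCol M I hJ ht₀, det_updateCol_add, det_updateCol_smul, hcol,
    updateCol_eq_self]

theorem det_submatrix_mul_transvection_eq_det (hJ : Injective J) (hij : i ≠ j)
    (h : ¬((∃ t, J t = j) ∧ ∀ t, J t ≠ i)) :
    ((M * transvection i j c).submatrix I J).det = (M.submatrix I J).det := by
  by_cases hj : ∃ t, J t = j
  · obtain ⟨t₀, ht₀⟩ := hj
    obtain ⟨t₁, ht₁⟩ : ∃ t, J t = i := by simpa using fun hi => h ⟨⟨t₀, ht₀⟩, hi⟩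
    rw [det_submatrix_mul_transvection M I c hJ ht₀,
      det_submatrix_replace_eq_zero M I hij ht₀ ht₁, mul_zero, add_zero]
  · rw [submatrix_mul_transvection_of_forall_ne M I c (not_exists.mp hj)]

end Columns

section Rows

variable [Fintype m] [DecidableEq m] [Fintype ι] [DecidableEq ι] (M : Matrix m n R) {I : ι → m}
  (J : ι → n) {i j : m} (c : R)

theorem det_transvection_mul_submatrix (hI : Injective I) {t₀ : ι} (ht₀ : I t₀ = i) :
    ((transvection i j c * M).submatrix I J).det =
      (M.submatrix I J).det + c * (M.submatrix (fun t => if I t = i then j else I t) J).det := by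
  rw [← det_transpose, transpose_submatrix, transpose_mul, transpose_transvection,
    det_submatrix_mul_transvection Mᵀ J c hI ht₀]
  simp only [← transpose_submatrix, det_transpose]

theorem det_transvection_mul_submatrix_eq_det (hI : Injective I) (hij : i ≠ j)
    (h : ¬((∃ t, I t = i) ∧ ∀ t, I t ≠ j)) :
    ((transvection i j c * M).submatrix I J).det = (M.submatrix I J).det := by
  rw [← det_transpose, transpose_submatrix, transpose_mul, transpose_transvection,
    det_submatrix_mul_transvection_eq_det Mᵀ J c hI hij.symm h, ← transpose_submatrix,
    det_transpose]

end Rows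

end Matrix

theorem chevE_eq_transvection {n k : ℕ} (hk : k + 1 < n) (a : ℝ) :
    chevE n k a = transvection ⟨k, Nat.lt_of_succ_lt hk⟩ ⟨k + 1, hk⟩ a := by
  ext p q
  simp only [chevE, transvection, Matrix.add_apply, one_apply, single_apply, Fin.ext_iff]
  split_ifs <;> first | (exfalso; omega) | simp

/-- Effect of multiplication by a Chevalley generator on minors:
minors of `X * e_k(a)` (resp. `e_k(a) * X`) agree with those of `X` except when the
column set contains `k+1` but not `k` (resp. the row set contains `k` but not `k+1`),
in which case the stated correction term appears. -/
theorem chevalley_minors {n : ℕ} (X : Matrix (Fin n) (Fin n) ℝ) (k : ℕ)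
    (hk : k + 1 < n) (a : ℝ) :
    (∀ m : ℕ, ∀ I J : Fin m → Fin n, StrictMono I → StrictMono J →
      (((∃ j, (J j : ℕ) = k + 1) ∧ ∀ j, (J j : ℕ) ≠ k) →
        ((X * chevE n k a).submatrix I J).det =
          (X.submatrix I J).det +
            a * (X.submatrix I
              (fun j => if (J j : ℕ) = k + 1 then (⟨k, by omega⟩ : Fin n) else J j)).det) ∧
      (¬ ((∃ j, (J j : ℕ) = k + 1) ∧ ∀ j, (J j : ℕ) ≠ k) →
        ((X * chevE n k a).submatrix I J).det = (X.submatrix I J).det)) ∧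
    (∀ m : ℕ, ∀ I J : Fin m → Fin n, StrictMono I → StrictMono J →
      (((∃ i, (I i : ℕ) = k) ∧ ∀ i, (I i : ℕ) ≠ k + 1) →
        ((chevE n k a * X).submatrix I J).det =
          (X.submatrix I J).det +
            a * (X.submatrix
              (fun i => if (I i : ℕ) = k then (⟨k + 1, hk⟩ : Fin n) else I i) J).det) ∧
      (¬ ((∃ i, (I i : ℕ) = k) ∧ ∀ i, (I i : ℕ) ≠ k + 1) →
        ((chevE n k a * X).submatrix I J).det = (X.submatrix I J).det)) := by
  set i : Fin n := ⟨k, by omega⟩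
  set j : Fin n := ⟨k + 1, hk⟩
  have hij : i ≠ j := by simp [i, j, Fin.ext_iff]
  have hi : ∀ p : Fin n, (p : ℕ) = k ↔ p = i := fun p => (Fin.ext_iff (b := i)).symm
  have hj : ∀ p : Fin n, (p : ℕ) = k + 1 ↔ p = j := fun p => (Fin.ext_iff (b := j)).symm
  simp only [ne_eq, hi, hj, chevE_eq_transvection hk]
  refine ⟨fun m I J _ hJ => ⟨?_, det_submatrix_mul_transvection_eq_det X I a hJ.injective hij⟩,
    fun m I J hI _ => ⟨?_, det_transvection_mul_submatrix_eq_det X J a hI.injective hij⟩⟩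
  · rintro ⟨⟨t₀, ht₀⟩, -⟩
    exact det_submatrix_mul_transvection X I a hJ.injective ht₀
  · rintro ⟨⟨t₀, ht₀⟩, -⟩
    exact det_transvection_mul_submatrix X J a hI.injective ht₀
end

section
/- Let n ≥ 2 and let M be the n×n tridiagonal matrix determined by real numbers a_1,…,a_n and b_1,…,b_{n−1}, all of which are nonzero. Then M is invertible, (n−1)-nonnegative and (n−1)-irreducible if and only if all of the following hold: b_i > 0 for all 1 ≤ i ≤ n−1; [a_x; a_{x−1},…,a_1; b_{x−1},…,b_1] > 0 for all 1 ≤ x ≤ n−2; [a_{n−1}; a_{n−2},…,a_1; b_{n−2},…,b_1] = 0; and [a_n; a_{n−1},…,a_2; b_{n−1},…,b_2] = 0. -/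
open Matrix

/-- A matrix is a Chevalley generator with positive parameter: some `e_i(a)` or
`f_i(a) = e_i(a)ᵀ` with `a > 0`. -/
def IsChevalley {n : ℕ} (M : Matrix (Fin n) (Fin n) ℝ) : Prop :=
  ∃ i a, i + 1 < n ∧ 0 < a ∧ (M = chevE n i a ∨ M = (chevE n i a)ᵀ)

/-- A `k`-nonnegative invertible matrix `M` is `k`-irreducible if in any factorization
`M = R * S` with `R`, `S` invertible and `k`-nonnegative, neither factor is a Chevalley
generator with positive parameter. -/
def KIrreducible {n : ℕ} (k : ℕ) (M : Matrix (Fin n) (Fin n) ℝ) : Prop :=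
  ∀ R S : Matrix (Fin n) (Fin n) ℝ, IsUnit R → IsUnit S →
    IsKNonneg k R → IsKNonneg k S → M = R * S →
    ¬ IsChevalley R ∧ ¬ IsChevalley S

/-- The `n × n` tridiagonal matrix with diagonal entries `a 0, …, a (n-1)`,
superdiagonal entries `b 0, …, b (n-2)`, and subdiagonal entries all `1`. -/
def tridiag (n : ℕ) (a b : ℕ → ℝ) : Matrix (Fin n) (Fin n) ℝ :=
  fun p q => if (p : ℕ) = (q : ℕ) then a p
    else if (q : ℕ) = (p : ℕ) + 1 then b p
    else if (p : ℕ) = (q : ℕ) + 1 then 1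
    else 0

/-- The continued fraction `[a 0; a 1, …, a m; b 1, …, b m]`, defined by
`[a 0;;] = a 0` and `[a 0; a 1,…,a m; b 1,…,b m] = a 0 - b 1 / [a 1; a 2,…,a m; b 2,…,b m]`. -/
noncomputable def contFrac : (ℕ → ℝ) → (ℕ → ℝ) → ℕ → ℝ
  | a, _, 0 => a 0
  | a, b, m + 1 => a 0 - b 1 / contFrac (fun t => a (t + 1)) (fun t => b (t + 1)) m

/-!
Write `D(i, m)` for the principal minor of `M` on the consecutive rows and columns
`i, …, i + m - 1` (indices from `0`); it is a continuant. The continued fractions of the statement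
are the ratios `D(0, y + 1) / D(0, y)` and `D(1, n - 1) / D(1, n - 2)`, so the conditions say
`b > 0`, `D(0, m) > 0` for `m ≤ n - 2` and `D(0, n - 1) = D(1, n - 1) = 0`.

If the off-diagonal entries are nonnegative, every minor of a tridiagonal matrix factors into
off-diagonal entries and minors `D(i, m)`, so `(n - 1)`-nonnegativity means `D(i, m) ≥ 0` for
`m ≤ n - 1`. The Desnanot–Jacobi identity
`D(i, m + 2) D(i + 1, m) = D(i, m + 1) D(i + 1, m + 1) - b_i ⋯ b_{i+m}` propagates positivity
from one starting row to the next, and gives `det M = D(0, n) < 0`.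

Splitting off a Chevalley generator on the left is a row operation. `e_i(-t) M` has the negative
entry `-t b_{i+1}` unless `i = n - 2`, and then its leading minor of order `n - 1` is
`D(0, n - 1) - t D(0, n - 2) < 0`; likewise `f_i(-t) M` has the entry `-t` unless `i = 0`, and
then its trailing minor of order `n - 1` is `D(1, n - 1) - t b_0 D(2, n - 2) < 0`. Conversely, if
`D(0, n - 1) > 0` (or `D(1, n - 1) > 0`), the same row operation with a small `t > 0` keeps `M`
`(n - 1)`-nonnegative, and `e_{n-2}(t)` (or `f_0(t)`) splits off. Factors on the right reduce to
factors on the left by transposition, which is why everything is done for tridiagonal matrices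
with an arbitrary subdiagonal `γ`.
-/

open Function

section Continuant

variable {R : Type*} [CommRing R] {α β γ α' β' γ' : ℕ → R} {i m : ℕ}

/-- The principal minor on the rows and columns `i, …, i + m - 1` of the tridiagonal matrix
with diagonal `α`, superdiagonal `β` and subdiagonal `γ` (`det_submatrix_consecutive`). -/
def continuant (α β γ : ℕ → R) (i : ℕ) : ℕ → R
  | 0 => 1
  | 1 => α i
  | m + 2 => α (i + m + 1) * continuant α β γ i (m + 1)
      - γ (i + m) * β (i + m) * continuant α β γ i m

@[simp] lemma continuant_zero : continuant α β γ i 0 = 1 := rfl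

@[simp] lemma continuant_one : continuant α β γ i 1 = α i := rfl

lemma continuant_add_two : continuant α β γ i (m + 2) =
    α (i + m + 1) * continuant α β γ i (m + 1) - γ (i + m) * β (i + m) * continuant α β γ i m :=
  rfl

lemma continuant_congr (hα : ∀ t < m, α (i + t) = α' (i + t))
    (hβγ : ∀ t, t + 1 < m → γ (i + t) * β (i + t) = γ' (i + t) * β' (i + t)) :
    continuant α β γ i m = continuant α' β' γ' i m := by
  induction m using Nat.twoStepInduction with
  | zero => rfl
  | one => simpa using hα 0 one_pos
  | more m ih₁ ih₂ =>
    rw [continuant_add_two, continuant_add_two, ih₁ (fun t ht => hα t (by omega))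
      (fun t ht => hβγ t (by omega)), ih₂ (fun t ht => hα t (by omega))
      (fun t ht => hβγ t (by omega)), hβγ m (by omega),
      show α (i + m + 1) = α' (i + m + 1) from hα (m + 1) (by omega)]

lemma continuant_swap : continuant α β γ i m = continuant α γ β i m :=
  continuant_congr (fun _ _ => rfl) (fun _ _ => mul_comm _ _)

lemma continuant_of_sub_eq_zero : continuant α β 0 i m = ∏ t ∈ Finset.range m, α (i + t) := by
  induction m using Nat.twoStepInduction with
  | zero => rfl
  | one => simp
  | more m _ ih => simp [continuant_add_two, ih, Finset.prod_range_succ, mul_comm, add_assoc]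

lemma continuant_desnanot_jacobi (i m : ℕ) :
    continuant α β γ i (m + 2) * continuant α β γ (i + 1) m =
      continuant α β γ i (m + 1) * continuant α β γ (i + 1) (m + 1) -
        ∏ t ∈ Finset.range (m + 1), γ (i + t) * β (i + t) := by
  induction m with
  | zero => simp [continuant_add_two]; ring
  | succ m ih =>
    have h₁ : continuant α β γ (i + 1) (m + 2) = α (i + m + 2) * continuant α β γ (i + 1) (m + 1)
        - γ (i + m + 1) * β (i + m + 1) * continuant α β γ (i + 1) m := by
      rw [continuant_add_two]; ring_nf
    rw [continuant_add_two (m := m + 1), h₁, Finset.prod_range_succ]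
    linear_combination γ (i + (m + 1)) * β (i + (m + 1)) * ih

lemma continuant_update_last (δ : R) :
    continuant (update α (i + m) (α (i + m) + δ)) β γ i (m + 1) =
      continuant α β γ i (m + 1) + δ * continuant α β γ i m := by
  cases m with
  | zero => simp
  | succ m =>
    have hcongr : ∀ k ≤ m + 1,
        continuant (update α (i + (m + 1)) (α (i + (m + 1)) + δ)) β γ i k =
          continuant α β γ i k := fun k hk =>
      continuant_congr (fun t ht => update_of_ne (by omega) _ _) (fun _ _ => rfl)
    rw [continuant_add_two, continuant_add_two, hcongr _ le_rfl, hcongr _ (by omega),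
      show i + m + 1 = i + (m + 1) from rfl, update_self]
    ring

lemma continuant_update_first (δ : R) (m : ℕ) :
    continuant (update α i (α i + δ)) β γ i (m + 1) =
      continuant α β γ i (m + 1) + δ * continuant α β γ (i + 1) m := by
  induction m using Nat.twoStepInduction with
  | zero => simp
  | one =>
    simp [continuant_add_two]
    ring
  | more m ih₁ ih₂ =>
    have h : continuant α β γ (i + 1) (m + 2) = α (i + m + 2) * continuant α β γ (i + 1) (m + 1)
        - γ (i + m + 1) * β (i + m + 1) * continuant α β γ (i + 1) m := by
      rw [continuant_add_two]; ring_nf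
    rw [continuant_add_two (m := m + 1), continuant_add_two (m := m + 1), ih₁, ih₂, h,
      update_of_ne (show i + (m + 1) + 1 ≠ i by omega)]
    ring_nf


lemma continuant_addRowBelow_of_eq {j : ℕ} (c : R) (h : i + m = j) :
    continuant (update α j (α j + c * γ j)) (update β j (β j + c * α (j + 1))) γ i (m + 1) =
      continuant α β γ i (m + 1) + c * γ j * continuant α β γ i m := by
  subst h
  rw [← continuant_update_last]
  exact continuant_congr (fun _ _ => rfl) fun t ht => by rw [update_of_ne (by omega)]

lemma continuant_addRowBelow_of_ne {j : ℕ} (c : R) (h : i + m ≤ j ∨ i + m = j + 2) :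
    continuant (update α j (α j + c * γ j)) (update β j (β j + c * α (j + 1))) γ i m =
      continuant α β γ i m := by
  rcases h with h | h
  · exact continuant_congr (fun t ht => update_of_ne (by omega) _ _)
      fun t ht => by rw [update_of_ne (by omega)]
  rcases m with _ | _ | m
  · rfl
  · simp [update_of_ne (show i ≠ j by omega)]
  · obtain rfl : j = i + m := by omega
    have hm : continuant (update α (i + m) (α (i + m) + c * γ (i + m)))
        (update β (i + m) (β (i + m) + c * α (i + m + 1))) γ i m = continuant α β γ i m :=
      continuant_congr (fun t ht => update_of_ne (by omega) _ _)
        fun t ht => by rw [update_of_ne (by omega)]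
    rw [continuant_add_two, continuant_addRowBelow_of_eq c rfl, hm, update_of_ne (by omega),
      update_self, continuant_add_two]
    ring

lemma continuant_addRowAbove_of_eq {j : ℕ} (c : R) (m : ℕ) :
    continuant (update α (j + 1) (α (j + 1) + c * β j)) β (update γ j (γ j + c * α j))
        (j + 1) (m + 1) =
      continuant α β γ (j + 1) (m + 1) + c * β j * continuant α β γ (j + 2) m := by
  exact (continuant_congr (fun _ _ => rfl) fun t ht => by rw [update_of_ne (by omega)]).trans
    (continuant_update_first _ m)

lemma continuant_addRowAbove_of_ne {j : ℕ} (c : R) (h : i = j ∨ j + 2 ≤ i) (m : ℕ) :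
    continuant (update α (j + 1) (α (j + 1) + c * β j)) β (update γ j (γ j + c * α j)) i m =
      continuant α β γ i m := by
  rcases h with rfl | h
  · induction m using Nat.twoStepInduction with
    | zero => rfl
    | one => simp
    | more m ih₁ ih₂ =>
      rcases m with _ | m
      · simp [continuant_add_two]; ring
      · rw [continuant_add_two, continuant_add_two (α := α) (m := m + 1), ih₁, ih₂,
          update_of_ne (show i + (m + 1) + 1 ≠ i + 1 by omega),
          update_of_ne (show i + (m + 1) ≠ i by omega)]
  · exact continuant_congr (fun t ht => update_of_ne (by omega) _ _)
      fun t ht => by rw [update_of_ne (by omega)]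

end Continuant

section BlockTriangular

variable {R : Type*} [CommRing R]

lemma det_eq_mul_of_lowerLeft_eq_zero {p q : ℕ} (A : Matrix (Fin (p + q)) (Fin (p + q)) R)
    (h : ∀ s t, A (Fin.natAdd p s) (Fin.castAdd q t) = 0) :
    A.det = (A.submatrix (Fin.castAdd q) (Fin.castAdd q)).det *
      (A.submatrix (Fin.natAdd p) (Fin.natAdd p)).det := by
  rw [← det_submatrix_equiv_self finSumFinEquiv A, ← det_fromBlocks_zero₂₁ _
    (A.submatrix (Fin.castAdd q) (Fin.natAdd p))]
  congr 1
  ext (s | s) (t | t) <;> simp [h]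

lemma det_eq_mul_of_upperRight_eq_zero {p q : ℕ} (A : Matrix (Fin (p + q)) (Fin (p + q)) R)
    (h : ∀ s t, A (Fin.castAdd q s) (Fin.natAdd p t) = 0) :
    A.det = (A.submatrix (Fin.castAdd q) (Fin.castAdd q)).det *
      (A.submatrix (Fin.natAdd p) (Fin.natAdd p)).det := by
  simpa only [det_transpose, ← transpose_submatrix] using
    det_eq_mul_of_lowerLeft_eq_zero Aᵀ fun s t => h t s

end BlockTriangular

section Tridiagonal

variable {R : Type*} [CommRing R] {α β γ : ℕ → R} {n i m : ℕ}

def tridiagonal (n : ℕ) (α β γ : ℕ → R) : Matrix (Fin n) (Fin n) R :=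
  fun p q => if (p : ℕ) = q then α p
    else if (q : ℕ) = p + 1 then β p
    else if (p : ℕ) = q + 1 then γ q
    else 0

variable {p q : Fin n}

lemma tridiagonal_apply_diag (h : (p : ℕ) = q) : tridiagonal n α β γ p q = α p := by
  simp [tridiagonal, h]

lemma tridiagonal_apply_super (h : (q : ℕ) = p + 1) : tridiagonal n α β γ p q = β p := by
  simp [tridiagonal, h]

lemma tridiagonal_apply_sub (h : (p : ℕ) = q + 1) : tridiagonal n α β γ p q = γ q := by
  rw [tridiagonal, if_neg (by omega), if_neg (by omega), if_pos h]

lemma tridiagonal_apply_eq_zero (h : (p : ℕ) + 1 < q ∨ (q : ℕ) + 1 < p) :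
    tridiagonal n α β γ p q = 0 := by
  simp only [tridiagonal]
  split_ifs <;> first | rfl | omega

lemma transpose_tridiagonal : (tridiagonal n α β γ)ᵀ = tridiagonal n α γ β := by
  ext p q
  simp only [transpose_apply, tridiagonal]
  split_ifs <;> first | rfl | omega | congr 1

def consecutive (i m : ℕ) (h : i + m ≤ n) : Fin m → Fin n := fun l => ⟨i + l, by omega⟩

@[simp] lemma coe_consecutive (h : i + m ≤ n) (l : Fin m) : (consecutive i m h l : ℕ) = i + l :=
  rfl

lemma consecutive_strictMono (h : i + m ≤ n) : StrictMono (consecutive i m h) :=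
  fun _ _ hl => Fin.mk_lt_mk.2 (Nat.add_lt_add_left hl i)

lemma tridiagonal_submatrix_consecutive (h : i + m ≤ n) :
    (tridiagonal n α β γ).submatrix (consecutive i m h) (consecutive i m h) =
      tridiagonal m (fun t => α (i + t)) (fun t => β (i + t)) (fun t => γ (i + t)) := by
  ext p q
  simp only [submatrix_apply, tridiagonal, coe_consecutive, add_assoc, add_right_inj]

lemma continuant_eq_shift (i m : ℕ) : continuant α β γ i m =
    continuant (fun t => α (i + t)) (fun t => β (i + t)) (fun t => γ (i + t)) 0 m := by
  induction m using Nat.twoStepInduction with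
  | zero => rfl
  | one => simp
  | more m ih₁ ih₂ => simp only [continuant_add_two, ih₁, ih₂, zero_add, add_assoc]

lemma det_tridiagonal (α β γ : ℕ → R) (m : ℕ) :
    (tridiagonal m α β γ).det = continuant α β γ 0 m := by
  induction m using Nat.twoStepInduction with
  | zero => simp
  | one => simp [tridiagonal]
  | more m ih₁ ih₂ =>
    set A := tridiagonal (m + 2) α β γ
    have hlast : ∀ j : Fin m, A (Fin.last (m + 1)) j.castSucc.castSucc = 0 := fun j =>
      tridiagonal_apply_eq_zero (by simp)
    have hcol : ∀ t : Fin (m + 1),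
        ((Fin.last m).castSucc.succAbove t : ℕ) = if (t : ℕ) < m then (t : ℕ) else m + 1 := by
      intro t
      simp only [Fin.succAbove, Fin.lt_def, Fin.val_castSucc, Fin.val_last]
      split_ifs <;> simp; omega
    -- removing the last row and the column `m` leaves a block lower triangular matrix
    have hcof : (A.submatrix (Fin.last (m + 1)).succAbove (Fin.last m).castSucc.succAbove).det =
        continuant α β γ 0 m * β m := by
      rw [det_eq_mul_of_upperRight_eq_zero (p := m) (q := 1), ← ih₁]
      · congr 1
        · congr 1
          ext s t
          simp only [A, submatrix_apply, tridiagonal, hcol, Fin.succAbove_last, Fin.val_castSucc,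
            Fin.val_castAdd]
          split_ifs <;> first | rfl | omega
        · simp only [det_unique, A, submatrix_apply, tridiagonal, hcol, Fin.succAbove_last,
            Fin.val_castSucc, Fin.val_natAdd]
          split_ifs <;> first | rfl | omega
      · intro s t
        simp only [A, submatrix_apply, tridiagonal, hcol, Fin.succAbove_last, Fin.val_castSucc,
          Fin.val_castAdd, Fin.val_natAdd]
        split_ifs <;> first | rfl | omega
    rw [det_succ_row A (Fin.last (m + 1)), Fin.sum_univ_castSucc, Fin.sum_univ_castSucc,
      Finset.sum_eq_zero fun j _ => by rw [hlast, mul_zero, zero_mul], hcof, Fin.succAbove_last,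
      show A.submatrix Fin.castSucc Fin.castSucc = tridiagonal (m + 1) α β γ from rfl, ih₂,
      continuant_add_two]
    simp [A, tridiagonal_apply_diag, tridiagonal_apply_sub]
    ring

lemma det_submatrix_consecutive (h : i + m ≤ n) :
    ((tridiagonal n α β γ).submatrix (consecutive i m h) (consecutive i m h)).det =
      continuant α β γ i m := by
  rw [tridiagonal_submatrix_consecutive, det_tridiagonal, continuant_eq_shift (α := α)]

lemma det_submatrix_eq_continuant_mul {p q i₀ : ℕ} {I J : Fin (p + (q + 1)) → Fin n}
    (hI : StrictMono I) (hJ : StrictMono J) (hp : 1 ≤ p) (hr : i₀ + p ≤ n)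
    (hrun : ∀ t : Fin p, (I (Fin.castAdd _ t) : ℕ) = i₀ + t ∧ (J (Fin.castAdd _ t) : ℕ) = i₀ + t)
    (hbreak : ¬((I (Fin.natAdd p 0) : ℕ) = i₀ + p ∧ (J (Fin.natAdd p 0) : ℕ) = i₀ + p)) :
    ((tridiagonal n α β γ).submatrix I J).det = continuant α β γ i₀ p *
      ((tridiagonal n α β γ).submatrix (I ∘ Fin.natAdd p) (J ∘ Fin.natAdd p)).det := by
  set P : Fin (p + (q + 1)) := Fin.natAdd p 0
  have hP : Fin.castAdd (q + 1) (⟨p - 1, by omega⟩ : Fin p) < P := Fin.lt_def.2 (by simp [P]; omega)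
  have hIP := hI hP
  have hJP := hJ hP
  have hPle : ∀ s, P ≤ Fin.natAdd p s := fun s => Fin.le_def.2 (by simp [P])
  have hIge : ∀ s, (I P : ℕ) ≤ I (Fin.natAdd p s) := fun s => hI.monotone (hPle s)
  have hJge : ∀ s, (J P : ℕ) ≤ J (Fin.natAdd p s) := fun s => hJ.monotone (hPle s)
  have hprev := hrun ⟨p - 1, by omega⟩
  rw [Fin.lt_def] at hIP hJP
  simp only at hprev
  set A := (tridiagonal n α β γ).submatrix I J
  -- the run breaks in the rows or in the columns, and either break makes `A` block triangular
  have hsplit : A.det = (A.submatrix (Fin.castAdd (q + 1)) (Fin.castAdd (q + 1))).det *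
      (A.submatrix (Fin.natAdd p) (Fin.natAdd p)).det := by
    by_cases hIbreak : (I P : ℕ) = i₀ + p
    · refine det_eq_mul_of_upperRight_eq_zero A fun s t => tridiagonal_apply_eq_zero ?_
      have := hJge t; have := hrun s; have := s.isLt
      omega
    · refine det_eq_mul_of_lowerLeft_eq_zero A fun s t => tridiagonal_apply_eq_zero ?_
      have := hIge s; have := hrun t; have := t.isLt
      omega
  have htop : A.submatrix (Fin.castAdd (q + 1)) (Fin.castAdd (q + 1)) =
      (tridiagonal n α β γ).submatrix (consecutive i₀ p hr) (consecutive i₀ p hr) := by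
    ext s t
    simp only [A, submatrix_apply]
    congr 1 <;> exact Fin.ext (by simp [hrun])
  rw [hsplit, htop, det_submatrix_consecutive, submatrix_submatrix]

lemma det_submatrix_eq_apply_mul {q : ℕ} {I J : Fin (1 + q) → Fin n} (hI : StrictMono I)
    (hJ : StrictMono J) (h : (J (Fin.castAdd q 0) : ℕ) = I (Fin.castAdd q 0) + 1 ∨
      (I (Fin.castAdd q 0) : ℕ) = J (Fin.castAdd q 0) + 1) :
    ((tridiagonal n α β γ).submatrix I J).det =
      tridiagonal n α β γ (I (Fin.castAdd q 0)) (J (Fin.castAdd q 0)) *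
        ((tridiagonal n α β γ).submatrix (I ∘ Fin.natAdd 1) (J ∘ Fin.natAdd 1)).det := by
  have hzs : ∀ s : Fin 1, Fin.castAdd q s = Fin.castAdd q 0 := fun s => by
    rw [Subsingleton.elim s 0]
  have hlt : ∀ t : Fin q, Fin.castAdd q 0 < Fin.natAdd 1 t := fun t => Fin.lt_def.2 (by simp)
  have hcorner : (((tridiagonal n α β γ).submatrix I J).submatrix (Fin.castAdd q)
      (Fin.castAdd q)).det = tridiagonal n α β γ (I (Fin.castAdd q 0)) (J (Fin.castAdd q 0)) := by
    simp [det_unique, hzs]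
  rw [← hcorner, ← submatrix_submatrix]
  rcases h with h | h
  · refine det_eq_mul_of_upperRight_eq_zero _ fun s t => tridiagonal_apply_eq_zero ?_
    have := hJ (hlt t)
    rw [hzs]
    omega
  · refine det_eq_mul_of_lowerLeft_eq_zero _ fun s t => tridiagonal_apply_eq_zero ?_
    have := hI (hlt s)
    rw [hzs]
    omega

end Tridiagonal

section Nonnegativity

variable {n k N i m : ℕ} {X : Matrix (Fin n) (Fin n) ℝ} {α β γ : ℕ → ℝ}

lemma IsKNonneg.transpose_s11 (h : IsKNonneg k X) : IsKNonneg k Xᵀ := fun m hm I J hI hJ => by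
  rw [← transpose_submatrix, det_transpose]
  exact h m hm J I hJ hI

lemma IsKNonneg.apply_nonneg (h : IsKNonneg k X) (hk : 1 ≤ k) (p q : Fin n) : 0 ≤ X p q := by
  simpa [det_fin_one] using
    h 1 hk (fun _ => p) (fun _ => q) (Subsingleton.strictMono _) (Subsingleton.strictMono _)

lemma IsKNonneg.super_nonneg (h : IsKNonneg k (tridiagonal n α β γ)) (hk : 1 ≤ k)
    (hi : i + 1 < n) : 0 ≤ β i := by
  have := h.apply_nonneg hk ⟨i, by omega⟩ ⟨i + 1, hi⟩
  rwa [tridiagonal_apply_super rfl] at this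

lemma IsKNonneg.sub_nonneg (h : IsKNonneg k (tridiagonal n α β γ)) (hk : 1 ≤ k)
    (hi : i + 1 < n) : 0 ≤ γ i := by
  have := h.apply_nonneg hk ⟨i + 1, hi⟩ ⟨i, by omega⟩
  rwa [tridiagonal_apply_sub rfl] at this

lemma IsKNonneg.continuant_nonneg (h : IsKNonneg k (tridiagonal n α β γ)) (hm : m ≤ k)
    (hr : i + m ≤ n) : 0 ≤ continuant α β γ i m := by
  simpa only [det_submatrix_consecutive] using
    h m hm _ _ (consecutive_strictMono hr) (consecutive_strictMono hr)

section Criterion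

variable (hc : ∀ i m, m ≤ k → i + m ≤ n → 0 ≤ continuant α β γ i m)
include hc

/-- Extend the common run `i₀, …, i₀ + p - 1` of rows and columns as far as it goes, then split off
a consecutive principal minor. -/
lemma det_submatrix_nonneg_of_run {I J : Fin N → Fin n} (hI : StrictMono I) (hJ : StrictMono J)
    (hN : N ≤ k)
    (ih : ∀ N' < N, ∀ I' J' : Fin N' → Fin n, StrictMono I' → StrictMono J' →
      0 ≤ ((tridiagonal n α β γ).submatrix I' J').det)
    (i₀ p : ℕ) (hp : 1 ≤ p) (hpN : p ≤ N) (hr : i₀ + p ≤ n)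
    (hrun : ∀ l : Fin N, (l : ℕ) < p → (I l : ℕ) = i₀ + l ∧ (J l : ℕ) = i₀ + l) :
    0 ≤ ((tridiagonal n α β γ).submatrix I J).det := by
  obtain ⟨d, hd⟩ : ∃ d, N = p + d := ⟨N - p, by omega⟩
  induction d generalizing p with
  | zero =>
    obtain rfl : p = N := hd.symm
    have hIc : I = consecutive i₀ p hr := funext fun l => Fin.ext (hrun l l.isLt).1
    have hJc : J = consecutive i₀ p hr := funext fun l => Fin.ext (hrun l l.isLt).2
    rw [hIc, hJc, det_submatrix_consecutive]
    exact hc _ _ hN hr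
  | succ d ihd =>
    let P : Fin N := ⟨p, by omega⟩
    by_cases hP : (I P : ℕ) = i₀ + p ∧ (J P : ℕ) = i₀ + p
    · refine ihd (p + 1) (by omega) (by omega) (by have := (I P).isLt; omega) (fun l hl => ?_)
        (by omega)
      rcases Nat.lt_succ_iff_lt_or_eq.1 hl with hl | hl
      · exact hrun l hl
      · obtain rfl : l = P := Fin.ext hl
        exact hP
    subst hd
    rw [det_submatrix_eq_continuant_mul hI hJ hp hr (fun t => hrun _ t.isLt) hP]
    exact mul_nonneg (hc _ _ (by omega) hr) (ih (d + 1) (by omega) _ _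
      (hI.comp (Fin.strictMono_natAdd p)) (hJ.comp (Fin.strictMono_natAdd p)))

/-- Peeling off the first row or column, or a run starting there, factors every minor into
off-diagonal entries and consecutive principal minors. -/
theorem isKNonneg_tridiagonal (hβ : ∀ i, i + 1 < n → 0 ≤ β i) (hγ : ∀ i, i + 1 < n → 0 ≤ γ i) :
    IsKNonneg k (tridiagonal n α β γ) := by
  intro N hN I J hI hJ
  induction N using Nat.strong_induction_on with
  | _ N ih =>
  rcases Nat.eq_zero_or_pos N with rfl | hpos
  · simp
  obtain ⟨q, rfl⟩ : ∃ q, N = 1 + q := ⟨N - 1, by omega⟩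
  replace ih : ∀ N' < 1 + q, ∀ I' J' : Fin N' → Fin n, StrictMono I' → StrictMono J' →
      0 ≤ ((tridiagonal n α β γ).submatrix I' J').det :=
    fun N' h I' J' hI' hJ' => ih N' h (by omega) I' J' hI' hJ'
  set z : Fin (1 + q) := Fin.castAdd q 0
  have hz : ∀ l, z ≤ l := fun l => Fin.le_def.2 (by simp [z])
  by_cases h₁ : (I z : ℕ) + 1 < J z
  · refine (det_eq_zero_of_row_eq_zero (A := (tridiagonal n α β γ).submatrix I J) z
      fun l => tridiagonal_apply_eq_zero ?_).ge
    exact Or.inl (h₁.trans_le (hJ.monotone (hz l)))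
  by_cases h₂ : (J z : ℕ) + 1 < I z
  · refine (det_eq_zero_of_column_eq_zero (A := (tridiagonal n α β γ).submatrix I J) z
      fun l => tridiagonal_apply_eq_zero ?_).ge
    exact Or.inr (h₂.trans_le (hI.monotone (hz l)))
  by_cases h₃ : (J z : ℕ) = I z + 1 ∨ (I z : ℕ) = J z + 1
  · rw [det_submatrix_eq_apply_mul hI hJ h₃]
    refine mul_nonneg ?_ (ih q (by omega) _ _ (hI.comp (Fin.strictMono_natAdd 1))
      (hJ.comp (Fin.strictMono_natAdd 1)))
    rcases h₃ with h₃ | h₃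
    · rw [tridiagonal_apply_super h₃]
      exact hβ _ (by omega)
    · rw [tridiagonal_apply_sub h₃]
      exact hγ _ (by omega)
  refine det_submatrix_nonneg_of_run hc hI hJ hN ih (I z) 1 le_rfl (by omega) (I z).isLt
    fun l hl => ?_
  have hz₀ : (z : ℕ) = 0 := rfl
  obtain rfl : l = z := Fin.ext (by omega)
  omega

end Criterion

end Nonnegativity

section Transvection

variable {R : Type*} [CommRing R] {α β γ : ℕ → R} {n : ℕ}

lemma transvection_mul_tridiagonal_of_add_two_eq {j : ℕ} (hj : j + 2 = n) (c : R) :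
    transvection (⟨j, by omega⟩ : Fin n) ⟨j + 1, by omega⟩ c * tridiagonal n α β γ =
      tridiagonal n (update α j (α j + c * γ j)) (update β j (β j + c * α (j + 1))) γ := by
  ext p ⟨q, hq⟩
  by_cases hp : p = ⟨j, by omega⟩
  · subst hp
    rw [transvection_mul_apply_same]
    simp only [tridiagonal, update_apply]
    split_ifs <;> first | omega | contradiction | (subst_vars; ring)
  · rw [transvection_mul_apply_of_ne _ _ _ _ hp]
    have hp' : (p : ℕ) ≠ j := fun h => hp (Fin.ext h)
    simp only [tridiagonal, update_apply]
    split_ifs <;> first | omega | rfl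

lemma transvection_one_zero_mul_tridiagonal (hn : 2 ≤ n) (c : R) :
    transvection (⟨1, by omega⟩ : Fin n) ⟨0, by omega⟩ c * tridiagonal n α β γ =
      tridiagonal n (update α 1 (α 1 + c * β 0)) β (update γ 0 (γ 0 + c * α 0)) := by
  ext p ⟨q, hq⟩
  by_cases hp : p = ⟨1, by omega⟩
  · subst hp
    rw [transvection_mul_apply_same]
    simp only [tridiagonal, update_apply]
    split_ifs <;> first | omega | contradiction | (subst_vars; ring)
  · rw [transvection_mul_apply_of_ne _ _ _ _ hp]
    have hp' : (p : ℕ) ≠ 1 := fun h => hp (Fin.ext h)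
    simp only [tridiagonal, update_apply]
    split_ifs <;> first | omega | rfl

end Transvection

section Chevalley

variable {n k i : ℕ}

lemma chevE_eq_transvection_s11 (h : i + 1 < n) (a : ℝ) :
    chevE n i a = transvection (⟨i, by omega⟩ : Fin n) ⟨i + 1, h⟩ a := by
  ext ⟨p, hp⟩ ⟨q, hq⟩
  simp only [chevE, transvection, Matrix.add_apply, one_apply, single_apply, Fin.mk.injEq]
  split_ifs <;> first | omega | simp

lemma transpose_transvection (p q : Fin n) (c : ℝ) :
    (transvection p q c)ᵀ = transvection q p c := by
  rw [transvection, transpose_add, transpose_one, transpose_single, transvection]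

lemma transpose_chevE_eq_transvection (h : i + 1 < n) (a : ℝ) :
    (chevE n i a)ᵀ = transvection (⟨i + 1, h⟩ : Fin n) ⟨i, by omega⟩ a := by
  rw [chevE_eq_transvection_s11 h, transpose_transvection]

lemma chevE_eq_tridiagonal (i : ℕ) (a : ℝ) : chevE n i a = tridiagonal n 1 (Pi.single i a) 0 := by
  ext ⟨p, hp⟩ ⟨q, hq⟩
  simp only [chevE, tridiagonal, Pi.single_apply, Pi.one_apply, Pi.zero_apply]
  split_ifs <;> first | omega | rfl

lemma isKNonneg_chevE {a : ℝ} (ha : 0 ≤ a) : IsKNonneg k (chevE n i a) := by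
  rw [chevE_eq_tridiagonal]
  refine isKNonneg_tridiagonal (fun _ _ _ _ => by simp [continuant_of_sub_eq_zero])
    (fun j _ => ?_) (fun _ _ => le_rfl)
  rcases eq_or_ne j i with rfl | hj
  · simpa using ha
  · simp [hj]

lemma isUnit_transvection {p q : Fin n} (h : p ≠ q) (c : ℝ) : IsUnit (transvection p q c) := by
  rw [isUnit_iff_isUnit_det, det_transvection_of_ne _ _ h]
  exact isUnit_one

lemma transvection_mul_transvection_neg {p q : Fin n} (h : p ≠ q) (c : ℝ) :
    transvection p q c * transvection p q (-c) = 1 := by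
  rw [transvection_mul_transvection_same _ _ h, add_neg_cancel, transvection_zero]

lemma IsChevalley.exists_eq_transvection {M : Matrix (Fin n) (Fin n) ℝ} (h : IsChevalley M) :
    ∃ (p q : Fin n) (t : ℝ), ((q : ℕ) = p + 1 ∨ (p : ℕ) = q + 1) ∧ 0 < t ∧
      M = transvection p q t := by
  obtain ⟨i, t, hi, ht, rfl | rfl⟩ := h
  · exact ⟨_, _, t, Or.inl rfl, ht, chevE_eq_transvection_s11 hi t⟩
  · exact ⟨_, _, t, Or.inr rfl, ht, transpose_chevE_eq_transvection hi t⟩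

end Chevalley

section Positivity

variable {n : ℕ} {α β γ : ℕ → ℝ} (hβ : ∀ i, i + 1 < n → 0 < β i)
  (hγ : ∀ i, i + 1 < n → 0 < γ i)
include hβ hγ

lemma prod_sub_mul_super_pos {i m : ℕ} (h : i + m < n) :
    0 < ∏ t ∈ Finset.range m, γ (i + t) * β (i + t) :=
  Finset.prod_pos fun t ht =>
    have := Finset.mem_range.1 ht
    mul_pos (hγ _ (by omega)) (hβ _ (by omega))

lemma continuant_succ_pos {i S : ℕ} (hS : i + S < n)
    (hnn : ∀ s ≤ S, 0 ≤ continuant α β γ i (s + 1)) (hpos : ∀ s ≤ S, 0 < continuant α β γ i s) :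
    ∀ s ≤ S, 0 < continuant α β γ (i + 1) s := by
  intro s hs
  induction s with
  | zero => simp
  | succ s ih =>
    have hdj := continuant_desnanot_jacobi (α := α) (β := β) (γ := γ) i s
    have hprod := prod_sub_mul_super_pos hβ hγ (i := i) (m := s + 1) (by omega)
    have h₁ := hnn (s + 1) hs
    have h₂ := ih (by omega)
    have h₃ := hpos (s + 1) hs
    exact pos_of_mul_pos_right (by nlinarith : 0 < continuant α β γ i (s + 1) *
      continuant α β γ (i + 1) (s + 1)) h₃.le

lemma continuant_pos_of_nonneg (hnn : ∀ i m, m ≤ n - 1 → i + m ≤ n → 0 ≤ continuant α β γ i m)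
    {i m : ℕ} (hm : m ≤ n - 2) (hr : i + m ≤ n) : 0 < continuant α β γ i m := by
  rcases m with _ | m
  · simp
  refine (hnn i (m + 1) (by omega) hr).lt_of_ne' fun h => ?_
  by_cases hi : i + (m + 1) < n
  · have hdj := continuant_desnanot_jacobi (α := α) (β := β) (γ := γ) i m
    rw [h, zero_mul] at hdj
    linarith [prod_sub_mul_super_pos hβ hγ (i := i) (m := m + 1) hi,
      mul_nonneg (hnn i (m + 2) (by omega) (by omega)) (hnn (i + 1) m (by omega) (by omega))]
  · have hdj := continuant_desnanot_jacobi (α := α) (β := β) (γ := γ) (i - 1) m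
    rw [show i - 1 + 1 = i by omega, h, mul_zero] at hdj
    linarith [prod_sub_mul_super_pos hβ hγ (i := i - 1) (m := m + 1) (by omega),
      mul_nonneg (hnn (i - 1) (m + 2) (by omega) (by omega)) (hnn i m (by omega) (by omega))]

lemma continuant_one_pos (hn : 2 ≤ n) (hlead : ∀ m ≤ n - 2, 0 < continuant α β γ 0 m)
    (hzero : continuant α β γ 0 (n - 1) = 0) : ∀ s ≤ n - 2, 0 < continuant α β γ 1 s := by
  refine continuant_succ_pos hβ hγ (i := 0) (by omega) (fun s hs => ?_) hlead
  rcases Nat.lt_or_ge (s + 1) (n - 1) with h | h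
  · exact (hlead _ (by omega)).le
  · rw [show s + 1 = n - 1 by omega, hzero]

end Positivity

/-- `continuant α β γ 0 m` is the leading principal minor of order `m` of
`tridiagonal n α β γ`, and `continuant α β γ 1 (n - 1)` its trailing principal minor of order
`n - 1`. -/
structure MinorCondition (n : ℕ) (α β γ : ℕ → ℝ) : Prop where
  two_le : 2 ≤ n
  super_pos : ∀ i, i + 1 < n → 0 < β i
  sub_pos : ∀ i, i + 1 < n → 0 < γ i
  leading_pos : ∀ m ≤ n - 2, 0 < continuant α β γ 0 m
  leading_eq_zero : continuant α β γ 0 (n - 1) = 0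
  trailing_eq_zero : continuant α β γ 1 (n - 1) = 0

namespace MinorCondition

variable {n : ℕ} {α β γ : ℕ → ℝ} (hmc : MinorCondition n α β γ)
include hmc

lemma symm : MinorCondition n α γ β where
  two_le := hmc.two_le
  super_pos := hmc.sub_pos
  sub_pos := hmc.super_pos
  leading_pos m hm := continuant_swap (γ := γ) ▸ hmc.leading_pos m hm
  leading_eq_zero := continuant_swap (γ := γ) ▸ hmc.leading_eq_zero
  trailing_eq_zero := continuant_swap (γ := γ) ▸ hmc.trailing_eq_zero

lemma continuant_one_pos : ∀ s ≤ n - 2, 0 < continuant α β γ 1 s :=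
  _root_.continuant_one_pos hmc.super_pos hmc.sub_pos hmc.two_le hmc.leading_pos
    hmc.leading_eq_zero

lemma continuant_pos_of_two_le {i : ℕ} (hi : 2 ≤ i) :
    ∀ s, i + s ≤ n → 0 < continuant α β γ i s := by
  have := hmc.two_le
  induction i, hi using Nat.le_induction with
  | base =>
    intro s hs
    refine continuant_succ_pos hmc.super_pos hmc.sub_pos (i := 1) (S := n - 2) (by omega)
      (fun s hs => ?_) hmc.continuant_one_pos s (by omega)
    rcases Nat.lt_or_ge (s + 1) (n - 1) with h | h
    · exact (hmc.continuant_one_pos _ (by omega)).le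
    · rw [show s + 1 = n - 1 by omega, hmc.trailing_eq_zero]
  | succ i hi ih =>
    intro s hs
    exact continuant_succ_pos hmc.super_pos hmc.sub_pos (S := n - i - 1) (by omega)
      (fun s hs => (ih (s + 1) (by omega)).le) (fun s hs => ih s (by omega)) s (by omega)

lemma continuant_nonneg {i m : ℕ} (hm : m ≤ n - 1) (hr : i + m ≤ n) :
    0 ≤ continuant α β γ i m := by
  have := hmc.two_le
  match i with
  | 0 =>
    rcases Nat.lt_or_ge m (n - 1) with h | h
    · exact (hmc.leading_pos m (by omega)).le
    · rw [show m = n - 1 by omega, hmc.leading_eq_zero]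
  | 1 =>
    rcases Nat.lt_or_ge m (n - 1) with h | h
    · exact (hmc.continuant_one_pos m (by omega)).le
    · rw [show m = n - 1 by omega, hmc.trailing_eq_zero]
  | i + 2 => exact (hmc.continuant_pos_of_two_le (by omega) m hr).le

lemma det_neg : (tridiagonal n α β γ).det < 0 := by
  have := hmc.two_le
  have hdj := continuant_desnanot_jacobi (α := α) (β := β) (γ := γ) 0 (n - 2)
  rw [show n - 2 + 2 = n by omega, show n - 2 + 1 = n - 1 by omega, hmc.leading_eq_zero,
    zero_mul, zero_sub] at hdj
  rw [det_tridiagonal]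
  nlinarith [prod_sub_mul_super_pos hmc.super_pos hmc.sub_pos (i := 0) (m := n - 1) (by omega),
    hmc.continuant_one_pos (n - 2) le_rfl]

lemma isUnit : IsUnit (tridiagonal n α β γ) := by
  rw [isUnit_iff_isUnit_det, isUnit_iff_ne_zero]
  exact hmc.det_neg.ne

lemma isKNonneg : IsKNonneg (n - 1) (tridiagonal n α β γ) :=
  isKNonneg_tridiagonal (fun _ _ hm hr => hmc.continuant_nonneg hm hr)
    (fun i hi => (hmc.super_pos i hi).le) (fun i hi => (hmc.sub_pos i hi).le)

lemma not_isKNonneg_transvection_mul_of_super {p q : Fin n} (hpq : (q : ℕ) = p + 1) {t : ℝ}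
    (ht : 0 < t) : ¬ IsKNonneg (n - 1) (transvection p q (-t) * tridiagonal n α β γ) := by
  have := hmc.two_le
  intro h
  by_cases hp : (p : ℕ) + 2 < n
  · have hentry := h.apply_nonneg (by omega) p ⟨p + 2, hp⟩
    rw [transvection_mul_apply_same, tridiagonal_apply_eq_zero (by simp),
      tridiagonal_apply_super (by simp [hpq])] at hentry
    nlinarith [hmc.super_pos q (by omega)]
  · obtain ⟨p, hp'⟩ := p
    obtain ⟨q, hq'⟩ := q
    obtain rfl : q = p + 1 := hpq
    replace hp : p + 2 = n := by simp only [not_lt] at hp; omega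
    rw [transvection_mul_tridiagonal_of_add_two_eq hp] at h
    have hminor := h.continuant_nonneg (i := 0) (m := p + 1) (by omega) (by omega)
    rw [continuant_addRowBelow_of_eq _ (zero_add p), show p + 1 = n - 1 by omega,
      hmc.leading_eq_zero] at hminor
    nlinarith [mul_pos (mul_pos ht (hmc.sub_pos p (by omega))) (hmc.leading_pos p (by omega))]

lemma not_isKNonneg_transvection_mul_of_sub {p q : Fin n} (hpq : (p : ℕ) = q + 1) {t : ℝ}
    (ht : 0 < t) : ¬ IsKNonneg (n - 1) (transvection p q (-t) * tridiagonal n α β γ) := by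
  have := hmc.two_le
  intro h
  by_cases hq : 1 ≤ (q : ℕ)
  · have hentry := h.apply_nonneg (by omega) p ⟨q - 1, by omega⟩
    rw [transvection_mul_apply_same, tridiagonal_apply_eq_zero (by simp; omega),
      tridiagonal_apply_sub (by simp; omega)] at hentry
    nlinarith [hmc.sub_pos (q - 1) (by omega)]
  · obtain ⟨p, hp'⟩ := p
    obtain ⟨q, hq'⟩ := q
    obtain rfl : q = 0 := by simp only [not_le] at hq; omega
    obtain rfl : p = 1 := hpq
    rw [transvection_one_zero_mul_tridiagonal (by omega)] at h
    have hminor := h.continuant_nonneg (i := 1) (m := n - 2 + 1) (by omega) (by omega)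
    have hrow := continuant_addRowAbove_of_eq (α := α) (β := β) (γ := γ) (j := 0) (-t) (n - 2)
    simp only [zero_add] at hrow
    rw [hrow, show n - 2 + 1 = n - 1 by omega, hmc.trailing_eq_zero] at hminor
    nlinarith [mul_pos (mul_pos ht (hmc.super_pos 0 (by omega)))
      (hmc.continuant_pos_of_two_le le_rfl (n - 2) (by omega))]

lemma not_isKNonneg_transvection_mul {p q : Fin n} (hpq : (q : ℕ) = p + 1 ∨ (p : ℕ) = q + 1)
    {t : ℝ} (ht : 0 < t) : ¬ IsKNonneg (n - 1) (transvection p q (-t) * tridiagonal n α β γ) :=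
  hpq.elim (hmc.not_isKNonneg_transvection_mul_of_super · ht)
    (hmc.not_isKNonneg_transvection_mul_of_sub · ht)

lemma kIrreducible : KIrreducible (n - 1) (tridiagonal n α β γ) := by
  intro R S _ _ hR hS hRS
  constructor
  · intro hc
    obtain ⟨p, q, t, hpq, ht, rfl⟩ := hc.exists_eq_transvection
    have hne : p ≠ q := fun h => by subst h; omega
    have hinv : transvection p q (-t) * transvection p q t = 1 := by
      simpa using transvection_mul_transvection_neg hne (-t)
    refine hmc.not_isKNonneg_transvection_mul hpq ht ?_
    rwa [hRS, ← Matrix.mul_assoc, hinv, Matrix.one_mul]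
  · intro hc
    obtain ⟨p, q, t, hpq, ht, rfl⟩ := hc.exists_eq_transvection
    have hne : p ≠ q := fun h => by subst h; omega
    refine hmc.symm.not_isKNonneg_transvection_mul hpq.symm ht ?_
    rw [← transpose_tridiagonal, ← transpose_transvection, ← transpose_mul, hRS,
      Matrix.mul_assoc, transvection_mul_transvection_neg hne, Matrix.mul_one]
    exact hR.transpose_s11

end MinorCondition

section Reducibility

open Filter Topology

variable {n : ℕ} {α β γ : ℕ → ℝ}

lemma eventually_mul_le {x : ℝ} (hx : 0 < x) (y : ℝ) : ∀ᶠ t in 𝓝[>] (0 : ℝ), t * y ≤ x :=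
  nhdsWithin_le_nhds <|
    ((continuous_mul_const y).tendsto' 0 0 (zero_mul y)).eventually (eventually_le_nhds hx)

lemma isKNonneg_addRowBelow {j : ℕ} (hj : j + 2 = n)
    (hnn : IsKNonneg (n - 1) (tridiagonal n α β γ)) {t : ℝ}
    (hblocks : ∀ i m, i + m = j →
      t * (γ j * continuant α β γ i m) ≤ continuant α β γ i (m + 1))
    (hentry : t * α (j + 1) ≤ β j) :
    IsKNonneg (n - 1) (tridiagonal n (update α j (α j + -t * γ j))
      (update β j (β j + -t * α (j + 1))) γ) := by
  refine isKNonneg_tridiagonal (fun i m hm hr => ?_) (fun i hi => ?_)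
    (fun i hi => hnn.sub_nonneg (by omega) hi)
  · rcases m with _ | m
    · simp
    by_cases hend : i + m = j
    · rw [continuant_addRowBelow_of_eq _ hend]
      linarith [hblocks i m hend]
    · rw [continuant_addRowBelow_of_ne _ (by omega)]
      exact hnn.continuant_nonneg hm hr
  · rcases eq_or_ne i j with rfl | hi'
    · rw [update_self]
      linarith
    · rw [update_of_ne hi']
      exact hnn.super_nonneg (by omega) hi

lemma isKNonneg_addRowAbove (hn : 2 ≤ n) (hnn : IsKNonneg (n - 1) (tridiagonal n α β γ)) {t : ℝ}
    (hblocks : ∀ m, m + 2 ≤ n → t * (β 0 * continuant α β γ 2 m) ≤ continuant α β γ 1 (m + 1))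
    (hentry : t * α 0 ≤ γ 0) :
    IsKNonneg (n - 1) (tridiagonal n (update α 1 (α 1 + -t * β 0)) β
      (update γ 0 (γ 0 + -t * α 0))) := by
  refine isKNonneg_tridiagonal (fun i m hm hr => ?_) (fun i hi => hnn.super_nonneg (by omega) hi)
    (fun i hi => ?_)
  · rcases m with _ | m
    · simp
    by_cases hi : i = 1
    · subst hi
      have hrow := continuant_addRowAbove_of_eq (α := α) (β := β) (γ := γ) (j := 0) (-t) m
      simp only [zero_add] at hrow
      rw [hrow]
      linarith [hblocks m (by omega)]
    · have hrow := continuant_addRowAbove_of_ne (α := α) (β := β) (γ := γ) (j := 0) (i := i) (-t)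
        (by omega) (m + 1)
      simp only [zero_add] at hrow
      rw [hrow]
      exact hnn.continuant_nonneg hm hr
  · rcases eq_or_ne i 0 with rfl | hi'
    · rw [update_self]
      linarith
    · rw [update_of_ne hi']
      exact hnn.sub_nonneg (by omega) hi

variable (hβ : ∀ i, i + 1 < n → 0 < β i) (hγ : ∀ i, i + 1 < n → 0 < γ i)
  (hu : IsUnit (tridiagonal n α β γ)) (hnn : IsKNonneg (n - 1) (tridiagonal n α β γ))
  (hirr : KIrreducible (n - 1) (tridiagonal n α β γ))
include hβ hγ hu hnn hirr

/-- If it were positive, subtracting a small multiple of row `n - 1` from row `n - 2` would keep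
the matrix `(n - 1)`-nonnegative and split off `e_{n-2}(t)`. -/
lemma leadingMinor_eq_zero_of_kIrreducible (hn : 2 ≤ n) : continuant α β γ 0 (n - 1) = 0 := by
  by_contra hne
  have hpos : ∀ i m, i + m = n - 2 → 0 < continuant α β γ i (m + 1) := by
    intro i m h
    rcases Nat.eq_zero_or_pos i with rfl | hi
    · refine (hnn.continuant_nonneg (by omega) (by omega)).lt_of_ne' ?_
      rwa [show m + 1 = n - 1 by omega]
    · exact continuant_pos_of_nonneg hβ hγ (fun i m hm hr => hnn.continuant_nonneg hm hr)
        (by omega) (by omega)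
  obtain ⟨t, ⟨hblocks, hentry⟩, ht⟩ : ∃ t, ((∀ i : Fin (n - 1),
      t * (γ (n - 2) * continuant α β γ i (n - 2 - i)) ≤ continuant α β γ i (n - 2 - i + 1)) ∧
        t * α (n - 2 + 1) ≤ β (n - 2)) ∧ 0 < t :=
    (((eventually_all.2 fun i : Fin (n - 1) => eventually_mul_le (hpos i (n - 2 - i) (by omega))
      _).and (eventually_mul_le (hβ (n - 2) (by omega)) _)).and self_mem_nhdsWithin).exists
  have hj : n - 2 + 2 = n := by omega
  have hpq : (⟨n - 2, by omega⟩ : Fin n) ≠ ⟨n - 2 + 1, by omega⟩ := by simp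
  have hS := isKNonneg_addRowBelow hj hnn (fun i m h => by
    obtain rfl : m = n - 2 - i := by omega
    exact hblocks ⟨i, by omega⟩) hentry
  rw [← transvection_mul_tridiagonal_of_add_two_eq hj] at hS
  have hR : IsKNonneg (n - 1)
      (transvection (⟨n - 2, by omega⟩ : Fin n) ⟨n - 2 + 1, by omega⟩ t) := by
    rw [← chevE_eq_transvection_s11]
    exact isKNonneg_chevE ht.le
  refine (hirr _ _ (isUnit_transvection hpq t) ((isUnit_transvection hpq (-t)).mul hu) hR hS
    ?_).1 ⟨n - 2, t, by omega, ht, Or.inl (chevE_eq_transvection_s11 _ t).symm⟩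
  rw [← Matrix.mul_assoc, transvection_mul_transvection_neg hpq, Matrix.one_mul]

/-- If it were positive, subtracting a small multiple of row `0` from row `1` would keep the
matrix `(n - 1)`-nonnegative and split off `f_0(t)`. -/
lemma trailingMinor_eq_zero_of_kIrreducible (hn : 2 ≤ n) : continuant α β γ 1 (n - 1) = 0 := by
  by_contra hne
  have hpos : ∀ m, m + 2 ≤ n → 0 < continuant α β γ 1 (m + 1) := by
    intro m hm
    rcases Nat.lt_or_ge (m + 2) n with h | h
    · exact continuant_pos_of_nonneg hβ hγ (fun i m hm hr => hnn.continuant_nonneg hm hr)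
        (by omega) (by omega)
    · refine (hnn.continuant_nonneg (by omega) (by omega)).lt_of_ne' ?_
      rwa [show m + 1 = n - 1 by omega]
  obtain ⟨t, ⟨hblocks, hentry⟩, ht⟩ : ∃ t, ((∀ m : Fin (n - 1),
      t * (β 0 * continuant α β γ 2 m) ≤ continuant α β γ 1 (m + 1)) ∧ t * α 0 ≤ γ 0) ∧ 0 < t :=
    (((eventually_all.2 fun m : Fin (n - 1) => eventually_mul_le (hpos m (by omega)) _).and
      (eventually_mul_le (hγ 0 (by omega)) _)).and self_mem_nhdsWithin).exists
  have hpq : (⟨1, by omega⟩ : Fin n) ≠ ⟨0, by omega⟩ := by simp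
  have hS := isKNonneg_addRowAbove hn hnn (fun m hm => hblocks ⟨m, by omega⟩) hentry
  rw [← transvection_one_zero_mul_tridiagonal hn] at hS
  have hR : IsKNonneg (n - 1) (transvection (⟨1, by omega⟩ : Fin n) ⟨0, by omega⟩ t) := by
    have := (isKNonneg_chevE (n := n) (i := 0) (k := n - 1) ht.le).transpose_s11
    rwa [transpose_chevE_eq_transvection (by omega)] at this
  refine (hirr _ _ (isUnit_transvection hpq t) ((isUnit_transvection hpq (-t)).mul hu) hR hS
    ?_).1 ⟨0, t, by omega, ht, Or.inr (transpose_chevE_eq_transvection _ t).symm⟩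
  rw [← Matrix.mul_assoc, transvection_mul_transvection_neg hpq, Matrix.one_mul]

end Reducibility

section ContinuedFraction

lemma contFrac_eq_div (α β γ : ℕ → ℝ) {x y : ℕ} (hy : y ≤ x)
    (hne : ∀ s, 1 ≤ s → s ≤ y → continuant α β γ (x - y) s ≠ 0) :
    contFrac (fun t => α (x - t)) (fun t => γ (x - t) * β (x - t)) y =
      continuant α β γ (x - y) (y + 1) / continuant α β γ (x - y) y := by
  induction y generalizing x with
  | zero => simp [contFrac]
  | succ y ih =>
    have hshift : ∀ f : ℕ → ℝ, (fun t => f (x - (t + 1))) = fun t => f (x - 1 - t) :=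
      fun f => funext fun t => congrArg f (by omega)
    have hx : x - 1 - y = x - (y + 1) := by omega
    have hD := hne (y + 1) (by omega) le_rfl
    rw [contFrac, hshift α, hshift fun t => γ t * β t, ih (by omega) (hx ▸ fun s h₁ h₂ =>
      hne s h₁ (by omega)), hx, show y + 1 + 1 = y + 2 from rfl, continuant_add_two,
      show x - (y + 1) + y + 1 = x - 0 by omega, show x - (y + 1) + y = x - 1 by omega]
    field_simp

lemma contFrac_eq_div_leading (α β γ : ℕ → ℝ) {y : ℕ}
    (hne : ∀ s, 1 ≤ s → s ≤ y → continuant α β γ 0 s ≠ 0) :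
    contFrac (fun t => α (y - t)) (fun t => γ (y - t) * β (y - t)) y =
      continuant α β γ 0 (y + 1) / continuant α β γ 0 y := by
  simpa only [Nat.sub_self] using contFrac_eq_div α β γ le_rfl (Nat.sub_self y ▸ hne)

end ContinuedFraction

section Characterization

variable {n : ℕ} {α β γ : ℕ → ℝ}

theorem isUnit_and_isKNonneg_and_kIrreducible_iff (hn : 2 ≤ n)
    (hβ : ∀ i, i + 1 < n → β i ≠ 0) (hγ : ∀ i, i + 1 < n → γ i ≠ 0) :
    (IsUnit (tridiagonal n α β γ) ∧ IsKNonneg (n - 1) (tridiagonal n α β γ) ∧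
      KIrreducible (n - 1) (tridiagonal n α β γ)) ↔ MinorCondition n α β γ := by
  refine ⟨fun ⟨hu, hnn, hirr⟩ => ?_, fun hmc => ⟨hmc.isUnit, hmc.isKNonneg, hmc.kIrreducible⟩⟩
  have hβ' i hi : 0 < β i := (hnn.super_nonneg (by omega) hi).lt_of_ne' (hβ i hi)
  have hγ' i hi : 0 < γ i := (hnn.sub_nonneg (by omega) hi).lt_of_ne' (hγ i hi)
  exact
    { two_le := hn
      super_pos := hβ'
      sub_pos := hγ'
      leading_pos := fun m hm => continuant_pos_of_nonneg hβ' hγ'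
        (fun _ _ hm hr => hnn.continuant_nonneg hm hr) hm (by omega)
      leading_eq_zero := leadingMinor_eq_zero_of_kIrreducible hβ' hγ' hu hnn hirr hn
      trailing_eq_zero := trailingMinor_eq_zero_of_kIrreducible hβ' hγ' hu hnn hirr hn }

lemma leading_pos_iff_contFrac_pos (N : ℕ) :
    (∀ m ≤ N, 0 < continuant α β γ 0 m) ↔
      ∀ y < N, 0 < contFrac (fun t => α (y - t)) (fun t => γ (y - t) * β (y - t)) y := by
  induction N with
  | zero => simp
  | succ N ih =>
    refine ⟨fun h y hy => ?_, fun h => ?_⟩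
    · rw [contFrac_eq_div_leading α β γ fun s _ hs => (h s (by omega)).ne']
      exact div_pos (h _ (by omega)) (h _ (by omega))
    · have hN := ih.2 fun y hy => h y (by omega)
      intro m hm
      rcases Nat.lt_or_ge m (N + 1) with hm' | hm'
      · exact hN m (by omega)
      · obtain rfl : m = N + 1 := by omega
        have hcf := h N (by omega)
        rwa [contFrac_eq_div_leading α β γ fun s _ hs => (hN s hs).ne',
          div_pos_iff_of_pos_right (hN N le_rfl)] at hcf

theorem minorCondition_iff (hn : 2 ≤ n) (hγ : ∀ i, i + 1 < n → 0 < γ i) :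
    MinorCondition n α β γ ↔ (∀ i, i + 1 < n → 0 < β i) ∧
      (∀ y, y + 2 < n → 0 < contFrac (fun t => α (y - t)) (fun t => γ (y - t) * β (y - t)) y) ∧
      contFrac (fun t => α (n - 2 - t)) (fun t => γ (n - 2 - t) * β (n - 2 - t)) (n - 2) = 0 ∧
      contFrac (fun t => α (n - 1 - t)) (fun t => γ (n - 1 - t) * β (n - 1 - t)) (n - 2) = 0 := by
  have hsub : n - 1 - (n - 2) = 1 := by omega
  have hsucc : n - 2 + 1 = n - 1 := by omega
  constructor
  · intro hmc
    refine ⟨hmc.super_pos, fun y hy => (leading_pos_iff_contFrac_pos _).1 hmc.leading_pos y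
      (by omega), ?_, ?_⟩
    · rw [contFrac_eq_div_leading α β γ fun s _ hs => (hmc.leading_pos s hs).ne', hsucc,
        hmc.leading_eq_zero, zero_div]
    · rw [contFrac_eq_div α β γ (by omega) fun s _ hs => (hsub ▸ hmc.continuant_one_pos s hs).ne',
        hsub, hsucc, hmc.trailing_eq_zero, zero_div]
  · rintro ⟨hβ, hcf, hlast, hlast'⟩
    have hlead := (leading_pos_iff_contFrac_pos (n - 2)).2 fun y hy => hcf y (by omega)
    rw [contFrac_eq_div_leading α β γ fun s _ hs => (hlead s hs).ne', hsucc,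
      div_eq_zero_iff] at hlast
    have hzero := hlast.resolve_right (hlead _ le_rfl).ne'
    have hone := continuant_one_pos hβ hγ hn hlead hzero
    rw [contFrac_eq_div α β γ (by omega) fun s _ hs => (hsub ▸ hone s hs).ne', hsub, hsucc,
      div_eq_zero_iff] at hlast'
    exact ⟨hn, hβ, hγ, hlead, hzero, hlast'.resolve_right (hone _ le_rfl).ne'⟩

end Characterization

theorem tridiag_irreducible_characterization_general (n : ℕ) (hn : 2 ≤ n) (a b : ℕ → ℝ)
    (hb : ∀ i, i + 1 < n → b i ≠ 0) :
    (IsUnit (tridiag n a b) ∧ IsKNonneg (n - 1) (tridiag n a b) ∧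
        KIrreducible (n - 1) (tridiag n a b)) ↔
      ((∀ i, i + 1 < n → 0 < b i) ∧
        (∀ y, y + 2 < n → 0 < contFrac (fun t => a (y - t)) (fun t => b (y - t)) y) ∧
        contFrac (fun t => a (n - 2 - t)) (fun t => b (n - 2 - t)) (n - 2) = 0 ∧
        contFrac (fun t => a (n - 1 - t)) (fun t => b (n - 1 - t)) (n - 2) = 0) := by
  have h := (isUnit_and_isKNonneg_and_kIrreducible_iff (γ := fun _ => 1) hn hb
    fun _ _ => one_ne_zero).trans (minorCondition_iff (α := a) (β := b) hn fun _ _ => one_pos)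
  simp only [one_mul] at h
  exact h

/-- Characterization of invertible `(n-1)`-nonnegative `(n-1)`-irreducible
tridiagonal matrices with nonzero diagonal and superdiagonal entries, via
positivity/vanishing of certain continued fractions (indices 0-based: the
1-based entry `a_j` is `a (j-1)` here). -/
theorem tridiag_irreducible_characterization (n : ℕ) (hn : 2 ≤ n) (a b : ℕ → ℝ)
    (ha : ∀ i, i < n → a i ≠ 0) (hb : ∀ i, i + 1 < n → b i ≠ 0) :
    (IsUnit (tridiag n a b) ∧ IsKNonneg (n - 1) (tridiag n a b) ∧
        KIrreducible (n - 1) (tridiag n a b)) ↔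
      ((∀ i, i + 1 < n → 0 < b i) ∧
        (∀ y, y + 2 < n → 0 < contFrac (fun t => a (y - t)) (fun t => b (y - t)) y) ∧
        contFrac (fun t => a (n - 2 - t)) (fun t => b (n - 2 - t)) (n - 2) = 0 ∧
        contFrac (fun t => a (n - 1 - t)) (fun t => b (n - 1 - t)) (n - 2) = 0) :=
  tridiag_irreducible_characterization_general n hn a b hb
end

section
/- Let n ≥ 3 and let K(A,B) and K(C,D) be K-generators with positive parameter vectors (A,B) and (C,D) respectively. Then the product K(A,B)·K(C,D) is totally nonnegative (all of its minors, of every order, are nonnegative). -/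
open Matrix

/-- The quantity `X = Σ_{k=1}^{n-2} (∏_{ℓ=2}^{k} b_{ℓ-1})(∏_{ℓ=k+1}^{n-2} a_ℓ)`
(written 0-based: the 1-based `a_j`, `b_j` are `a (j-1)`, `b (j-1)` here). -/
noncomputable def KgenX (n : ℕ) (a b : ℕ → ℝ) : ℝ :=
  ∑ k ∈ Finset.range (n - 2),
    (∏ m ∈ Finset.range k, b m) * ∏ m ∈ Finset.Ico (k + 1) (n - 2), a m

/-- The quantity `Y = b_1 ⋯ b_{n-2}` (0-based: `b 0 ⋯ b (n-3)`). -/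
noncomputable def KgenY (n : ℕ) (b : ℕ → ℝ) : ℝ := ∏ m ∈ Finset.range (n - 2), b m

/-- The `K`-generator `K(a, b)` (0-based indexing of the parameters). -/
noncomputable def Kgen (n : ℕ) (a b : ℕ → ℝ) : Matrix (Fin n) (Fin n) ℝ :=
  fun p q =>
    if (p : ℕ) + 1 = n ∧ (q : ℕ) + 1 = n then b (n - 2) * KgenX n a b
    else if (p : ℕ) + 2 = n ∧ (q : ℕ) + 2 = n then b (n - 3)
    else if (p : ℕ) = (q : ℕ) ∧ (p : ℕ) = 0 then a 0
    else if (p : ℕ) = (q : ℕ) then a p + b ((p : ℕ) - 1)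
    else if (p : ℕ) + 2 = n ∧ (q : ℕ) + 1 = n then b (n - 2) * KgenY n b
    else if (q : ℕ) = (p : ℕ) + 1 then a p * b p
    else if (p : ℕ) = (q : ℕ) + 1 then 1
    else 0

/-!
Each K-generator `K` is tridiagonal with nonnegative entries, so every minor of `K` splits, through
block-triangular factorizations, into contiguous principal minors ("windows"). A window avoiding
the last index is a minor of the product of a nonnegative lower and a nonnegative upper bidiagonal
matrix, which are totally nonnegative; a window ending at the last index satisfies a three-term
recurrence whose solution is an explicit product of positive factors with a partial sum of `X`.
Hence all minors of `K` of order less than `n` are nonnegative, while the expansion along the first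
row gives `det K ≤ 0`. By the Cauchy–Binet formula the minors of order less than `n` of a product
are sums of products of such minors, and the full determinant of the product is a product of two
nonpositive numbers.
-/

open Finset

namespace Matrix

variable {R : Type*} [CommRing R] {m n s t : ℕ}

theorem det_mul_eq_sum_injective (A : Matrix (Fin m) (Fin n) R) (B : Matrix (Fin n) (Fin m) R) :
    (A * B).det =
      ∑ p : Fin m → Fin n with Function.Injective p, (A.submatrix id p).det * ∏ i, B (p i) i := by
  calc (A * B).det
      = ∑ p : Fin m → Fin n, ∑ σ : Equiv.Perm (Fin m),
          (Equiv.Perm.sign σ : R) * ∏ i, A (σ i) (p i) * B (p i) i := by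
        simp only [det_apply', mul_apply, prod_univ_sum, mul_sum, Fintype.piFinset_univ]
        rw [sum_comm]
    _ = ∑ p : Fin m → Fin n, (A.submatrix id p).det * ∏ i, B (p i) i := by
        simp only [det_apply', submatrix_apply, id_eq, prod_mul_distrib, sum_mul, mul_assoc]
    _ = _ := by
        refine (sum_subset (filter_subset _ _) fun p _ hp => ?_).symm
        obtain ⟨i, j, hpij, hij⟩ := Function.not_injective_iff.mp (by simpa using hp)
        rw [det_zero_of_column_eq hij (by simp [hpij]), zero_mul]

theorem det_mul_eq_sum_strictMono (A : Matrix (Fin m) (Fin n) R) (B : Matrix (Fin n) (Fin m) R) :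
    (A * B).det =
      ∑ g : Fin m → Fin n with StrictMono g, (A.submatrix id g).det * (B.submatrix g id).det := by
  rw [det_mul_eq_sum_injective]
  have expand : ∀ g : Fin m → Fin n, (A.submatrix id g).det * (B.submatrix g id).det =
      ∑ σ : Equiv.Perm (Fin m), (A.submatrix id (g ∘ σ)).det * ∏ i, B (g (σ i)) i := by
    intro g
    simp only [det_apply' (B.submatrix g id), mul_sum, submatrix_apply, id_eq]
    refine sum_congr rfl fun σ _ => ?_
    rw [show A.submatrix id (g ∘ σ) = (A.submatrix id g).submatrix id σ from rfl, det_permute']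
    ring
  simp only [expand, ← sum_product']
  refine (sum_bij (fun x _ => x.1 ∘ x.2) ?_ ?_ ?_ fun _ _ => rfl).symm
  · simp only [mem_product, mem_filter_univ, mem_univ, and_true]
    exact fun x hx => hx.injective.comp x.2.injective
  · simp only [mem_product, mem_filter_univ, mem_univ, and_true]
    rintro ⟨g, σ⟩ hg ⟨g', σ'⟩ hg' h
    have hgg' : g = g' := by
      refine hg.range_inj hg' |>.mp ?_
      rw [← EquivLike.range_comp g σ, ← EquivLike.range_comp g' σ']
      exact congrArg Set.range h
    subst hgg'
    exact Prod.ext rfl (Equiv.ext fun i => hg.injective (congrFun h i))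
  · intro p hp
    have hp : Function.Injective p := by simpa using hp
    refine ⟨(p ∘ Tuple.sort p, (Tuple.sort p)⁻¹), ?_, ?_⟩
    · simp only [mem_product, mem_filter_univ, mem_univ, and_true]
      exact (Tuple.monotone_sort p).strictMono_of_injective (hp.comp (Tuple.sort p).injective)
    · ext i
      simp

theorem det_eq_mul_of_natAdd_castAdd_eq_zero (M : Matrix (Fin (s + t)) (Fin (s + t)) R)
    (h : ∀ i j, M (Fin.natAdd s i) (Fin.castAdd t j) = 0) :
    M.det = (M.submatrix (Fin.castAdd t) (Fin.castAdd t)).det *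
      (M.submatrix (Fin.natAdd s) (Fin.natAdd s)).det := by
  have hblocks : M.submatrix finSumFinEquiv finSumFinEquiv =
      fromBlocks (M.submatrix (Fin.castAdd t) (Fin.castAdd t))
        (M.submatrix (Fin.castAdd t) (Fin.natAdd s)) 0
        (M.submatrix (Fin.natAdd s) (Fin.natAdd s)) := by
    ext (i | i) (j | j) <;> simp [h]
  rw [← det_submatrix_equiv_self finSumFinEquiv, hblocks, det_fromBlocks_zero₂₁]

theorem det_eq_mul_of_castAdd_natAdd_eq_zero (M : Matrix (Fin (s + t)) (Fin (s + t)) R)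
    (h : ∀ i j, M (Fin.castAdd t i) (Fin.natAdd s j) = 0) :
    M.det = (M.submatrix (Fin.castAdd t) (Fin.castAdd t)).det *
      (M.submatrix (Fin.natAdd s) (Fin.natAdd s)).det := by
  simpa [det_transpose, ← transpose_submatrix] using
    det_eq_mul_of_natAdd_castAdd_eq_zero Mᵀ fun i j => h j i

theorem det_succ_succ_of_tridiagonal (M : Matrix (Fin (m + 2)) (Fin (m + 2)) R)
    (hrow : ∀ j : Fin m, M 0 j.succ.succ = 0) (hcol : ∀ i : Fin m, M i.succ.succ 0 = 0) :
    M.det = M 0 0 * (M.submatrix Fin.succ Fin.succ).det -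
      M 0 1 * M 1 0 * (M.submatrix (Fin.succ ∘ Fin.succ) (Fin.succ ∘ Fin.succ)).det := by
  have hminor : (M.submatrix Fin.succ (Fin.succAbove 1)).det =
      M 1 0 * (M.submatrix (Fin.succ ∘ Fin.succ) (Fin.succ ∘ Fin.succ)).det := by
    rw [det_succ_column_zero, Fin.sum_univ_succ]
    have hsucc : Fin.succAbove 1 ∘ Fin.succ = Fin.succ ∘ (Fin.succ : Fin m → Fin (m + 1)) :=
      funext fun i => Fin.succAbove_of_le_castSucc _ _ (Fin.le_def.mpr (by simp))
    simp [hcol, hsucc]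
  rw [det_succ_row_zero, Fin.sum_univ_succ, Fin.sum_univ_succ]
  simp [hrow, hminor]
  ring

end Matrix

theorem StrictMono.val_add_sub_le {m n : ℕ} {I : Fin m → Fin n} (hI : StrictMono I)
    {i j : Fin m} (hij : i ≤ j) : (I i : ℕ) + ((j : ℕ) - i) ≤ I j := by
  obtain ⟨d, hd⟩ := Nat.exists_eq_add_of_le (Fin.le_def.mp hij)
  induction d generalizing j with
  | zero => simp [show j = i from Fin.ext (by omega)]
  | succ d ih =>
    let j' : Fin m := ⟨i + d, by omega⟩
    have h₁ := ih (j := j') (Fin.le_def.mpr (by simp [j'])) rfl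
    have h₂ : (I j' : ℕ) < I j := hI (Fin.lt_def.mpr (by simp [j']; omega))
    simp only [j'] at h₁ h₂
    omega

theorem strictMono_of_val_eq_add {m n i₀ : ℕ} {I : Fin m → Fin n}
    (hI : ∀ j, (I j : ℕ) = i₀ + j) : StrictMono I := fun j j' h => by
  simp only [Fin.lt_def, hI] at h ⊢
  omega

-- For a tridiagonal matrix the second alternative makes the minor with rows `I` and columns `J`
-- block triangular.
theorem StrictMono.eq_window_or_exists_split {m n : ℕ} {I J : Fin m → Fin n}
    (hI : StrictMono I) (hJ : StrictMono J) (hm : 1 < m) :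
    (∃ i₀, ∀ k : Fin m, (I k : ℕ) = i₀ + k ∧ (J k : ℕ) = i₀ + k) ∨
    ∃ s, 0 < s ∧ s < m ∧
      ((∀ i j : Fin m, (j : ℕ) < s → s ≤ (i : ℕ) → (J j : ℕ) + 2 ≤ I i) ∨
       (∀ i j : Fin m, (i : ℕ) < s → s ≤ (j : ℕ) → (I i : ℕ) + 2 ≤ J j)) := by
  obtain ⟨z, hz0⟩ : ∃ z : Fin m, (z : ℕ) = 0 := ⟨⟨0, by omega⟩, rfl⟩
  have hz : ∀ k, z ≤ k := fun k => Fin.le_def.mpr (hz0 ▸ Nat.zero_le _)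
  rcases lt_trichotomy (I z : ℕ) (J z) with hlt | heq | hgt
  · refine Or.inr ⟨1, one_pos, hm, Or.inr fun i j hi hj => ?_⟩
    have := hJ.val_add_sub_le (hz j)
    have : i = z := Fin.ext (by omega)
    subst this
    omega
  · by_cases hrun : ∀ k : Fin m, (I k : ℕ) = I z + k ∧ (J k : ℕ) = I z + k
    · exact Or.inl ⟨_, hrun⟩
    obtain ⟨k, hk, hmin⟩ := wellFounded_lt.has_min _ (not_forall.mp hrun)
    have hrun_lt : ∀ j : Fin m, j < k → (I j : ℕ) = I z + j ∧ (J j : ℕ) = I z + j :=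
      fun j hj => not_not.mp fun hc => hmin j hc hj
    have hk0 : (z : ℕ) < k := (hz k).lt_of_ne fun h => hk (by subst h; exact ⟨by omega, by omega⟩)
    have hIk := hI.val_add_sub_le (hz k)
    have hJk := hJ.val_add_sub_le (hz k)
    refine Or.inr ⟨k, by omega, k.2, ?_⟩
    rcases not_and_or.mp hk with hIk' | hJk'
    · refine Or.inl fun i j hj hi => ?_
      have := (hrun_lt j (Fin.lt_def.mpr hj)).2
      have := hI.val_add_sub_le (Fin.le_def.mpr hi)
      omega
    · refine Or.inr fun i j hi hj => ?_
      have := (hrun_lt i (Fin.lt_def.mpr hi)).1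
      have := hJ.val_add_sub_le (Fin.le_def.mpr hj)
      omega
  · refine Or.inr ⟨1, one_pos, hm, Or.inl fun i j hj hi => ?_⟩
    have := hI.val_add_sub_le (hz i)
    have : j = z := Fin.ext (by omega)
    subst this
    omega

theorem IsKNonneg.mul {n k : ℕ} {X Y : Matrix (Fin n) (Fin n) ℝ} (hX : IsKNonneg k X)
    (hY : IsKNonneg k Y) : IsKNonneg k (X * Y) := by
  intro m hm I J hI hJ
  rw [show (X * Y).submatrix I J = X.submatrix I id * Y.submatrix id J by ext; simp [mul_apply],
    det_mul_eq_sum_strictMono]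
  exact sum_nonneg fun g hg =>
    mul_nonneg (hX m hm I g hI (mem_filter.mp hg).2) (hY m hm g J (mem_filter.mp hg).2 hJ)

theorem IsKNonneg.of_det_nonneg {n : ℕ} {X : Matrix (Fin n) (Fin n) ℝ}
    (hX : IsKNonneg (n - 1) X) (hdet : 0 ≤ X.det) : IsKNonneg n X := by
  intro m hm I J hI hJ
  obtain hm | rfl := hm.lt_or_eq
  · exact hX m (by omega) I J hI hJ
  · rwa [hI.eq_id, hJ.eq_id, submatrix_id_id]

theorem isKNonneg_of_tridiagonal {n k : ℕ} {X : Matrix (Fin n) (Fin n) ℝ}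
    (hX : ∀ p q, 0 ≤ X p q)
    (htri : ∀ p q : Fin n, (p : ℕ) + 2 ≤ q ∨ (q : ℕ) + 2 ≤ p → X p q = 0)
    (hwindow : ∀ m ≤ k, ∀ (i₀ : ℕ) (I : Fin m → Fin n), (∀ j, (I j : ℕ) = i₀ + j) →
      0 ≤ (X.submatrix I I).det) :
    IsKNonneg k X := by
  intro m
  induction m using Nat.strong_induction_on with
  | _ m ih =>
  intro hm I J hI hJ
  rcases Nat.lt_or_ge m 2 with hm2 | hm2
  · interval_cases m
    · simp
    · simpa using hX _ _
  rcases hI.eq_window_or_exists_split hJ hm2 with ⟨i₀, hwin⟩ | ⟨s, hs0, hsm, hsplit⟩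
  · obtain rfl : J = I := funext fun j => Fin.ext ((hwin j).2.trans (hwin j).1.symm)
    exact hwindow m hm i₀ J fun j => (hwin j).1
  obtain ⟨t, rfl⟩ : ∃ t, m = s + t := ⟨m - s, by omega⟩
  have hblocks : 0 ≤ ((X.submatrix I J).submatrix (Fin.castAdd t) (Fin.castAdd t)).det *
      ((X.submatrix I J).submatrix (Fin.natAdd s) (Fin.natAdd s)).det := by
    simp only [submatrix_submatrix]
    exact mul_nonneg
      (ih s (by omega) (by omega) _ _ (hI.comp (Fin.strictMono_castAdd t))
        (hJ.comp (Fin.strictMono_castAdd t)))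
      (ih t (by omega) (by omega) _ _ (hI.comp (Fin.strictMono_natAdd s))
        (hJ.comp (Fin.strictMono_natAdd s)))
  rcases hsplit with hsplit | hsplit
  · rwa [det_eq_mul_of_natAdd_castAdd_eq_zero]
    exact fun i j => htri _ _ (Or.inr (hsplit _ _ (by simp) (by simp)))
  · rwa [det_eq_mul_of_castAdd_natAdd_eq_zero]
    exact fun i j => htri _ _ (Or.inl (hsplit _ _ (by simp) (by simp)))

theorem det_submatrix_nonneg_of_lowerTriangular {n m : ℕ} {X : Matrix (Fin n) (Fin n) ℝ}
    (hX : ∀ p q, 0 ≤ X p q) (hlow : X.IsLowerTriangular) {I : Fin m → Fin n}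
    (hI : StrictMono I) : 0 ≤ (X.submatrix I I).det := by
  rw [det_of_isLowerTriangular (X.submatrix I I) fun i j hij => hlow (hI hij)]
  exact prod_nonneg fun i _ => hX _ _

theorem det_submatrix_nonneg_of_upperTriangular {n m : ℕ} {X : Matrix (Fin n) (Fin n) ℝ}
    (hX : ∀ p q, 0 ≤ X p q) (hup : X.IsUpperTriangular) {I : Fin m → Fin n}
    (hI : StrictMono I) : 0 ≤ (X.submatrix I I).det := by
  rw [det_of_isUpperTriangular (M := X.submatrix I I) fun i j hij => hup (hI hij)]
  exact prod_nonneg fun i _ => hX _ _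

def lowerBidiagonal (n : ℕ) (d : ℕ → ℝ) : Matrix (Fin n) (Fin n) ℝ := fun p q =>
  if p = q then d p else if (p : ℕ) = q + 1 then 1 else 0

def upperBidiagonal (n : ℕ) (e : ℕ → ℝ) : Matrix (Fin n) (Fin n) ℝ := fun p q =>
  if p = q then 1 else if (q : ℕ) = p + 1 then e p else 0

section Bidiagonal

variable {n : ℕ} {d e : ℕ → ℝ}

theorem lowerBidiagonal_isKNonneg (hd : ∀ i < n, 0 ≤ d i) (k : ℕ) :
    IsKNonneg k (lowerBidiagonal n d) := by
  have hnonneg : ∀ p q, 0 ≤ lowerBidiagonal n d p q := fun p q => by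
    unfold lowerBidiagonal; split_ifs <;> simp [hd]
  refine isKNonneg_of_tridiagonal hnonneg (fun p q h => ?_) fun m _ i₀ I hI =>
    det_submatrix_nonneg_of_lowerTriangular hnonneg (fun p q h => ?_) (strictMono_of_val_eq_add hI)
  · unfold lowerBidiagonal; split_ifs <;> first | rfl | omega
  · have h : (p : ℕ) < q := OrderDual.toDual_lt_toDual.mp h
    unfold lowerBidiagonal; split_ifs <;> first | rfl | omega

theorem upperBidiagonal_isKNonneg (he : ∀ i, i + 1 < n → 0 ≤ e i) (k : ℕ) :
    IsKNonneg k (upperBidiagonal n e) := by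
  have hnonneg : ∀ p q, 0 ≤ upperBidiagonal n e p q := fun p q => by
    unfold upperBidiagonal; split_ifs <;> first | positivity | exact he _ (by omega)
  refine isKNonneg_of_tridiagonal hnonneg (fun p q h => ?_) fun m _ i₀ I hI =>
    det_submatrix_nonneg_of_upperTriangular hnonneg (fun p q h => ?_) (strictMono_of_val_eq_add hI)
  · unfold upperBidiagonal; split_ifs <;> first | rfl | omega
  · have h : (q : ℕ) < p := h
    unfold upperBidiagonal; split_ifs <;> first | rfl | omega

end Bidiagonal

-- Partial sums of `KgenX n a b = KgenS n a b (n - 2)`.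
def KgenS (n : ℕ) (a b : ℕ → ℝ) (i : ℕ) : ℝ :=
  ∑ k ∈ range i, (∏ t ∈ range k, b t) * ∏ t ∈ Ico (k + 1) (n - 2), a t

section Kgen

variable {n : ℕ} {a b : ℕ → ℝ}

section Entries

variable {p q : Fin n}

theorem Kgen_apply_eq_zero (h : (p : ℕ) + 2 ≤ q ∨ (q : ℕ) + 2 ≤ p) : Kgen n a b p q = 0 := by
  have := p.2; have := q.2
  unfold Kgen; split_ifs <;> first | rfl | omega

theorem Kgen_apply_of_eq_add_one (h : (p : ℕ) = q + 1) : Kgen n a b p q = 1 := by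
  have := p.2
  unfold Kgen; split_ifs <;> first | rfl | omega

theorem Kgen_apply_zero_zero (hn : 3 ≤ n) (hp : (p : ℕ) = 0) (hq : (q : ℕ) = 0) :
    Kgen n a b p q = a 0 := by
  unfold Kgen; split_ifs <;> first | rfl | omega

theorem Kgen_apply_self (h : (p : ℕ) = q) (h1 : 1 ≤ (p : ℕ)) (h2 : (p : ℕ) + 3 ≤ n) :
    Kgen n a b p q = a p + b (p - 1) := by
  unfold Kgen; split_ifs <;> first | rfl | omega

theorem Kgen_apply_of_add_one_eq (h : (p : ℕ) + 1 = q) (h2 : (p : ℕ) + 3 ≤ n) :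
    Kgen n a b p q = a p * b p := by
  unfold Kgen; split_ifs <;> first | rfl | omega

theorem Kgen_apply_last_last (hp : (p : ℕ) + 1 = n) (hq : (q : ℕ) + 1 = n) :
    Kgen n a b p q = b (n - 2) * KgenX n a b := by
  unfold Kgen; split_ifs <;> first | rfl | omega

theorem Kgen_apply_penult_penult (hp : (p : ℕ) + 2 = n) (hq : (q : ℕ) + 2 = n) :
    Kgen n a b p q = b (n - 3) := by
  unfold Kgen; split_ifs <;> first | rfl | omega

theorem Kgen_apply_penult_last (hp : (p : ℕ) + 2 = n) (hq : (q : ℕ) + 1 = n) :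
    Kgen n a b p q = b (n - 2) * KgenY n b := by
  unfold Kgen; split_ifs <;> first | rfl | omega

end Entries

-- The diagonal of the lower factor vanishes at index `n - 2`, where `K` has the entry `b (n - 3)`.
theorem Kgen_apply_eq_mul_apply (hn : 3 ≤ n) (p q : Fin n) (hq : (q : ℕ) + 1 < n) :
    Kgen n a b p q =
      (lowerBidiagonal n (fun i => if i < n - 2 then a i else 0) * upperBidiagonal n b) p q := by
  rw [mul_apply]
  obtain ⟨_ | p, hp⟩ := p
  · rw [Fintype.sum_eq_single ⟨0, hp⟩ fun k hk => ?_]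
    all_goals simp only [Kgen, lowerBidiagonal, upperBidiagonal, Fin.ext_iff] at *
    all_goals split_ifs <;> grind
  · rw [Fintype.sum_eq_add ⟨p + 1, hp⟩ ⟨p, by omega⟩ (by simp [Fin.ext_iff]) fun k hk => ?_]
    all_goals simp only [Kgen, lowerBidiagonal, upperBidiagonal, Fin.ext_iff] at *
    all_goals split_ifs <;> grind

theorem KgenS_nonneg (ha : ∀ i < n - 2, 0 < a i) (hb : ∀ i < n - 1, 0 < b i) {i : ℕ}
    (hi : i ≤ n) : 0 ≤ KgenS n a b i :=
  sum_nonneg fun k hk => mul_nonneg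
    (prod_nonneg fun t ht => (hb t (by simp at hk ht; omega)).le)
    (prod_nonneg fun t ht => (ha t (by simp at ht; omega)).le)

theorem KgenS_recurrence {i : ℕ} (hi : i + 1 < n - 2) :
    (a (i + 1) + b i) * KgenS n a b (i + 1) - a (i + 1) * KgenS n a b (i + 2) =
      b i * KgenS n a b i := by
  simp only [KgenS, sum_range_succ, prod_range_succ,
    prod_eq_prod_Ico_succ_bot (show i + 1 < n - 2 from hi)]
  ring

theorem Kgen_det_window_of_last (hn : 3 ≤ n) {len i : ℕ} (hlen : 0 < len) (hi : i + 1 + len = n)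
    {I : Fin len → Fin n} (hI : ∀ j, (I j : ℕ) = i + 1 + j) :
    ((Kgen n a b).submatrix I I).det = b (n - 2) * (∏ t ∈ Ico i (n - 2), b t) * KgenS n a b i := by
  induction len using Nat.strong_induction_on generalizing i with
  | _ len ih =>
  match len, hlen, I, hI with
  | 1, _, I, hI =>
    have h0 := hI 0
    simp only [Fin.val_zero, add_zero] at h0
    obtain rfl : i = n - 2 := by omega
    rw [det_fin_one, submatrix_apply, Kgen_apply_last_last (by omega) (by omega)]
    simp [KgenS, KgenX]
  | 2, _, I, hI =>
    have h0 := hI 0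
    have h1 := hI 1
    simp at h0 h1
    obtain rfl : i = n - 3 := by omega
    rw [det_fin_two, submatrix_apply, submatrix_apply, submatrix_apply, submatrix_apply,
      Kgen_apply_penult_penult (by omega) (by omega), Kgen_apply_last_last (by omega) (by omega),
      Kgen_apply_penult_last (by omega) (by omega), Kgen_apply_of_eq_add_one (by omega)]
    obtain ⟨k, rfl⟩ : ∃ k, n = k + 3 := ⟨n - 3, by omega⟩
    simp only [KgenX, KgenY, KgenS, show k + 3 - 2 = k + 1 by omega, show k + 3 - 3 = k by omega,
      sum_range_succ, prod_range_succ, Ico_self, prod_empty, Nat.Ico_succ_singleton, prod_singleton]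
    ring
  | l + 3, _, I, hI =>
    have h0 := hI 0
    have h1 := hI 1
    simp only [Fin.val_zero, add_zero, Fin.val_one] at h0 h1
    have hwin₁ := ih (l + 2) (by omega) (i := i + 1) (I := I ∘ Fin.succ) (by omega) (by omega)
      fun j => by simp [hI]; omega
    have hwin₂ := ih (l + 1) (by omega) (i := i + 2) (I := I ∘ Fin.succ ∘ Fin.succ) (by omega)
      (by omega) fun j => by simp [hI]; omega
    rw [det_succ_succ_of_tridiagonal _ (fun j => ?_) (fun j => ?_)]
    · simp only [submatrix_apply, submatrix_submatrix]
      rw [Kgen_apply_self rfl (by omega) (by omega), Kgen_apply_of_add_one_eq (by omega) (by omega),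
        Kgen_apply_of_eq_add_one (by omega), hwin₁, hwin₂, h0, Nat.add_sub_cancel,
        prod_eq_prod_Ico_succ_bot (show i < n - 2 by omega),
        prod_eq_prod_Ico_succ_bot (show i + 1 < n - 2 by omega)]
      linear_combination (b (n - 2) * b (i + 1) * ∏ t ∈ Ico (i + 2) (n - 2), b t) *
        KgenS_recurrence (a := a) (b := b) (show i + 1 < n - 2 by omega)
    · exact Kgen_apply_eq_zero (Or.inl (by simp [hI]))
    · exact Kgen_apply_eq_zero (Or.inr (by simp [hI]))

theorem Kgen_nonneg (hn : 3 ≤ n) (ha : ∀ i < n - 2, 0 < a i) (hb : ∀ i < n - 1, 0 < b i)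
    (p q : Fin n) : 0 ≤ Kgen n a b p q := by
  have := p.2
  have hX : 0 ≤ KgenX n a b := KgenS_nonneg ha hb (Nat.sub_le n 2)
  have hY : 0 ≤ KgenY n b := prod_nonneg fun t ht => (hb t (by simp at ht; omega)).le
  unfold Kgen
  split_ifs <;> first
    | positivity
    | exact mul_nonneg (hb _ (by omega)).le ‹_›
    | exact (hb _ (by omega)).le
    | exact (ha _ (by omega)).le
    | exact add_nonneg (ha _ (by omega)).le (hb _ (by omega)).le
    | exact mul_nonneg (ha _ (by omega)).le (hb _ (by omega)).le

theorem Kgen_det_window_nonneg (hn : 3 ≤ n) (ha : ∀ i < n - 2, 0 < a i)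
    (hb : ∀ i < n - 1, 0 < b i) {len i₀ : ℕ} (hlen : len ≤ n - 1) {I : Fin len → Fin n}
    (hI : ∀ j, (I j : ℕ) = i₀ + j) : 0 ≤ ((Kgen n a b).submatrix I I).det := by
  rcases Nat.eq_zero_or_pos len with rfl | hlen0
  · simp
  have hend := hI ⟨len - 1, by omega⟩
  have := (I ⟨len - 1, by omega⟩).2
  simp only at hend
  by_cases hlast : i₀ + len < n
  · rw [show (Kgen n a b).submatrix I I = (lowerBidiagonal n _ * upperBidiagonal n b).submatrix I I
      from ext fun j k => Kgen_apply_eq_mul_apply hn _ _ (by rw [hI]; omega)]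
    refine ((lowerBidiagonal_isKNonneg (fun i _ => ?_) len).mul
      (upperBidiagonal_isKNonneg (fun i hi => (hb i (by omega)).le) len)) len le_rfl I I
      (strictMono_of_val_eq_add hI) (strictMono_of_val_eq_add hI)
    split_ifs with h
    · exact (ha i h).le
    · rfl
  · obtain ⟨i, rfl⟩ : ∃ i, i₀ = i + 1 := ⟨i₀ - 1, by omega⟩
    rw [Kgen_det_window_of_last hn hlen0 (by omega) hI]
    have := KgenS_nonneg ha hb (i := i) (by omega)
    have := (hb (n - 2) (by omega)).le
    have : 0 ≤ ∏ t ∈ Ico i (n - 2), b t := prod_nonneg fun t ht => (hb t (by simp at ht; omega)).le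
    positivity

theorem Kgen_isKNonneg (hn : 3 ≤ n) (ha : ∀ i < n - 2, 0 < a i) (hb : ∀ i < n - 1, 0 < b i) :
    IsKNonneg (n - 1) (Kgen n a b) :=
  isKNonneg_of_tridiagonal (Kgen_nonneg hn ha hb) (fun _ _ => Kgen_apply_eq_zero)
    fun _ hm _ _ hI => Kgen_det_window_nonneg hn ha hb hm hI

theorem Kgen_det_nonpos (hn : 3 ≤ n) (ha : ∀ i < n - 2, 0 < a i) (hb : ∀ i < n - 1, 0 < b i) :
    (Kgen n a b).det ≤ 0 := by
  obtain ⟨m, rfl⟩ : ∃ m, n = m + 3 := ⟨n - 3, by omega⟩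
  rw [det_succ_succ_of_tridiagonal (m := m + 1) _ (fun j => Kgen_apply_eq_zero (Or.inl (by simp)))
    (fun j => Kgen_apply_eq_zero (Or.inr (by simp))),
    Kgen_det_window_of_last hn (i := 0) (by omega) (by omega) (fun j => by simp; omega),
    Kgen_det_window_of_last hn (i := 1) (by omega) (by omega) (fun j => by simp; omega),
    Kgen_apply_zero_zero hn rfl rfl, Kgen_apply_of_add_one_eq (by simp) (by simp),
    Kgen_apply_of_eq_add_one (by simp)]
  have := KgenS_nonneg ha hb (i := 1) (by omega)
  have := (ha 0 (by omega)).le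
  have := (hb 0 (by omega)).le
  have := (hb (m + 3 - 2) (by omega)).le
  have : 0 ≤ ∏ t ∈ Ico 1 (m + 3 - 2), b t :=
    prod_nonneg fun t ht => (hb t (by simp at ht; omega)).le
  simp only [KgenS, range_zero, sum_empty, mul_zero, zero_sub, Fin.val_zero, neg_nonpos]
  positivity

end Kgen

/-- The product of two `K`-generators is totally nonnegative. -/
theorem Kgen_mul_Kgen_totallyNonneg (n : ℕ) (hn : 3 ≤ n) (A B C D : ℕ → ℝ)
    (hA : ∀ i, i < n - 2 → 0 < A i) (hB : ∀ i, i < n - 1 → 0 < B i)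
    (hC : ∀ i, i < n - 2 → 0 < C i) (hD : ∀ i, i < n - 1 → 0 < D i) :
    IsKNonneg n (Kgen n A B * Kgen n C D) := by
  refine ((Kgen_isKNonneg hn hA hB).mul (Kgen_isKNonneg hn hC hD)).of_det_nonneg ?_
  rw [det_mul]
  exact mul_nonneg_of_nonpos_of_nonpos (Kgen_det_nonpos hn hA hB) (Kgen_det_nonpos hn hC hD)
end

section
/- Let H_n be the monoid presented by generators t_1, …, t_{n−1} subject to the relations t_i·t_i = t_i for all i, t_i·t_j·t_i = t_j·t_i·t_j whenever |i−j| = 1, and t_i·t_j = t_j·t_i whenever |i−j| > 1. For m ∈ H_n, let ℓ(m) denote the minimal length of a word in the generators representing m. Then for every m ∈ H_n and every generator t = t_i, exactly one of the following holds: ℓ(t·m) = ℓ(m) + 1, or t·m = m. -/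
/-- One-step rewriting between words in the generators `t_0, …, t_{n-2}` of the
0-Hecke monoid `H_n`: the shortening relation `t_i t_i = t_i`, the braid relation
`t_i t_j t_i = t_j t_i t_j` for `|i - j| = 1`, and the commutation relation
`t_i t_j = t_j t_i` for `|i - j| > 1`, applied inside any context. -/
inductive HeckeStep (n : ℕ) : List (Fin (n - 1)) → List (Fin (n - 1)) → Prop
  | shorten (u v : List (Fin (n - 1))) (i : Fin (n - 1)) :
      HeckeStep n (u ++ [i, i] ++ v) (u ++ [i] ++ v)
  | braid (u v : List (Fin (n - 1))) (i j : Fin (n - 1))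
      (hij : (i : ℕ) + 1 = (j : ℕ) ∨ (j : ℕ) + 1 = (i : ℕ)) :
      HeckeStep n (u ++ [i, j, i] ++ v) (u ++ [j, i, j] ++ v)
  | comm (u v : List (Fin (n - 1))) (i j : Fin (n - 1))
      (hij : (i : ℕ) + 1 < (j : ℕ) ∨ (j : ℕ) + 1 < (i : ℕ)) :
      HeckeStep n (u ++ [i, j] ++ v) (u ++ [j, i] ++ v)

/-- Two words represent the same element of the monoid `H_n` iff they are related by
the equivalence relation generated by the defining relations. -/
def HeckeEquiv (n : ℕ) : List (Fin (n - 1)) → List (Fin (n - 1)) → Prop :=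
  Relation.EqvGen (HeckeStep n)

/-- The length of the element of `H_n` represented by the word `w`: the minimal
number of letters of a word representing the same element. -/
noncomputable def heckeLen (n : ℕ) (w : List (Fin (n - 1))) : ℕ :=
  sInf {k | ∃ w', HeckeEquiv n w w' ∧ w'.length = k}

/-
`H_n` acts on sequences `f : ℕ → ℕ`, the generator `t_i` sorting the entries at positions
`i, i + 1` into decreasing order; the defining relations hold for this action, so the sequence
`eval w` obtained from the identity is an invariant of the element represented by `w`. The
number of inversions among the first `n` entries of `eval w` is at most the length of `w`, and
`t_i` raises it by exactly one unless `i` is already a descent, in which case `t_i` acts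
trivially. Call a word reduced if its length equals this inversion count. The heart of the
proof is the exchange lemma: if `t` is a descent of a reduced word `u`, then `u ≡ t u'` with
`u'` shorter; by strong induction on `u = s v`, according to whether `s` equals `t`, commutes
with it, or is adjacent to it (braid relation). Hence every word is equivalent to a reduced
one, `ℓ` is the inversion count, a descent `t` is absorbed (`t m = m`), and any other `t`
increases `ℓ` by one.
-/

open Finset

namespace ZeroHecke

def sortAt (i : ℕ) (f : ℕ → ℕ) : ℕ → ℕ := fun k =>
  if k = i then max (f i) (f (i + 1))
  else if k = i + 1 then min (f i) (f (i + 1))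
  else f k

def IsDescent (i : ℕ) (f : ℕ → ℕ) : Prop := f (i + 1) ≤ f i

def numInv (n : ℕ) (f : ℕ → ℕ) : ℕ :=
  #{p ∈ range n ×ˢ range n | p.1 < p.2 ∧ f p.2 < f p.1}

theorem sortAt_of_isDescent {i : ℕ} {f : ℕ → ℕ} (h : IsDescent i f) : sortAt i f = f := by
  rw [IsDescent] at h
  funext k
  simp only [sortAt]
  split_ifs <;> subst_vars <;> omega

theorem isDescent_sortAt (i : ℕ) (f : ℕ → ℕ) : IsDescent i (sortAt i f) := by
  simp [IsDescent, sortAt]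

theorem sortAt_idem (i : ℕ) (f : ℕ → ℕ) : sortAt i (sortAt i f) = sortAt i f :=
  sortAt_of_isDescent (isDescent_sortAt i f)

theorem sortAt_comm {i j : ℕ} (h : i + 1 < j ∨ j + 1 < i) (f : ℕ → ℕ) :
    sortAt i (sortAt j f) = sortAt j (sortAt i f) := by
  funext k
  simp only [sortAt]
  split_ifs <;> subst_vars <;> omega

theorem sortAt_braid {i j : ℕ} (h : i + 1 = j ∨ j + 1 = i) (f : ℕ → ℕ) :
    sortAt i (sortAt j (sortAt i f)) = sortAt j (sortAt i (sortAt j f)) := by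
  funext k
  obtain rfl | rfl := h <;> simp only [sortAt] <;> split_ifs <;> subst_vars <;> omega

theorem isDescent_sortAt_iff_of_far {i j : ℕ} (h : i + 1 < j ∨ j + 1 < i) (f : ℕ → ℕ) :
    IsDescent j (sortAt i f) ↔ IsDescent j f := by
  simp only [IsDescent, sortAt]
  split_ifs <;> omega

theorem IsDescent.of_sortAt_of_adj {i j : ℕ} (h : i + 1 = j ∨ j + 1 = i) {f : ℕ → ℕ}
    (hi : ¬IsDescent i f) (hj : IsDescent j (sortAt i f)) : IsDescent j f := by
  obtain rfl | rfl := h <;> simp only [IsDescent, sortAt] at * <;> split_ifs at * <;> omega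

theorem IsDescent.of_sortAt_sortAt_of_adj {i j : ℕ} (h : i + 1 = j ∨ j + 1 = i)
    {f : ℕ → ℕ} (hj : ¬IsDescent j f) (hi : ¬IsDescent i (sortAt j f))
    (hji : IsDescent j (sortAt i (sortAt j f))) : IsDescent i f := by
  obtain rfl | rfl := h <;> simp only [IsDescent, sortAt] at * <;> split_ifs at * <;> omega

theorem numInv_id (n : ℕ) : numInv n id = 0 := by
  simp only [numInv, card_eq_zero, filter_eq_empty_iff, id]
  omega

theorem numInv_comp_swap {n i : ℕ} (hi : i + 1 < n) {f : ℕ → ℕ} (hf : f i < f (i + 1)) :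
    numInv n (f ∘ Equiv.swap i (i + 1)) = numInv n f + 1 := by
  let e := (Equiv.swap i (i + 1)).prodCongr (Equiv.swap i (i + 1))
  -- swapping two adjacent positions keeps the relative order of every other pair of positions
  have hinv : {p ∈ range n ×ˢ range n | p.1 < p.2 ∧
        (f ∘ Equiv.swap i (i + 1)) p.2 < (f ∘ Equiv.swap i (i + 1)) p.1} =
      insert (i, i + 1)
        ({p ∈ range n ×ˢ range n | p.1 < p.2 ∧ f p.2 < f p.1}.map e.toEmbedding) := by
    ext ⟨x, y⟩
    rw [mem_insert, mem_map_equiv, mem_filter, mem_filter]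
    simp only [mem_product, mem_range, Prod.mk.injEq, e, Equiv.prodCongr_symm, Equiv.symm_swap,
      Equiv.prodCongr_apply, Prod.map, Function.comp_apply, Equiv.swap_apply_def]
    split_ifs <;> subst_vars <;> omega
  rw [numInv, hinv, card_insert_of_notMem, card_map, numInv]
  simp [e, mem_map_equiv]

theorem numInv_sortAt_of_not_isDescent {n i : ℕ} (hi : i + 1 < n) {f : ℕ → ℕ}
    (h : ¬IsDescent i f) : numInv n (sortAt i f) = numInv n f + 1 := by
  rw [IsDescent, not_le] at h
  convert numInv_comp_swap hi h using 2
  funext k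
  simp only [sortAt, Function.comp_apply, Equiv.swap_apply_def]
  split_ifs <;> subst_vars <;> omega

theorem numInv_sortAt_le {n i : ℕ} (hi : i + 1 < n) (f : ℕ → ℕ) :
    numInv n (sortAt i f) ≤ numInv n f + 1 := by
  by_cases h : IsDescent i f
  · rw [sortAt_of_isDescent h]; omega
  · rw [numInv_sortAt_of_not_isDescent hi h]

def eval {m : ℕ} (w : List (Fin m)) : ℕ → ℕ :=
  w.foldr (fun (i : Fin m) f => sortAt i f) id

@[simp] theorem eval_cons {m : ℕ} (i : Fin m) (w : List (Fin m)) :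
    eval (i :: w) = sortAt i (eval w) := rfl

theorem eval_append {m : ℕ} (u w : List (Fin m)) :
    eval (u ++ w) = u.foldr (fun (i : Fin m) f => sortAt i f) (eval w) :=
  List.foldr_append

end ZeroHecke

open ZeroHecke

section

variable {n : ℕ}

theorem HeckeEquiv.trans {u v w : List (Fin (n - 1))} (h₁ : HeckeEquiv n u v)
    (h₂ : HeckeEquiv n v w) : HeckeEquiv n u w :=
  Relation.EqvGen.trans _ _ _ h₁ h₂

theorem HeckeEquiv.symm {u v : List (Fin (n - 1))} (h : HeckeEquiv n u v) : HeckeEquiv n v u :=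
  Relation.EqvGen.symm _ _ h

theorem HeckeStep.cons (i : Fin (n - 1)) {w w' : List (Fin (n - 1))} (h : HeckeStep n w w') :
    HeckeStep n (i :: w) (i :: w') := by
  cases h with
  | shorten u v j => exact .shorten (i :: u) v j
  | braid u v j k hjk => exact .braid (i :: u) v j k hjk
  | comm u v j k hjk => exact .comm (i :: u) v j k hjk

theorem HeckeEquiv.cons (i : Fin (n - 1)) {w w' : List (Fin (n - 1))} (h : HeckeEquiv n w w') :
    HeckeEquiv n (i :: w) (i :: w') := by
  induction h with
  | rel _ _ h => exact .rel _ _ (h.cons i)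
  | refl => exact .refl _
  | symm _ _ _ ih => exact ih.symm
  | trans _ _ _ _ _ ih₁ ih₂ => exact ih₁.trans ih₂

theorem HeckeStep.eval_eq {w w' : List (Fin (n - 1))} (h : HeckeStep n w w') :
    eval w = eval w' := by
  cases h <;> simp only [List.append_assoc, eval_append] <;> congr 1
  · exact sortAt_idem _ _
  · exact sortAt_braid ‹_› _
  · exact sortAt_comm ‹_› _

theorem HeckeEquiv.eval_eq {w w' : List (Fin (n - 1))} (h : HeckeEquiv n w w') :
    eval w = eval w' := by
  induction h with
  | rel _ _ h => exact h.eval_eq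
  | refl => rfl
  | symm _ _ _ ih => exact ih.symm
  | trans _ _ _ _ _ ih₁ ih₂ => exact ih₁.trans ih₂

end

namespace ZeroHecke

variable {n : ℕ}

def IsReduced (w : List (Fin (n - 1))) : Prop := w.length = numInv n (eval w)

theorem numInv_eval_le (w : List (Fin (n - 1))) : numInv n (eval w) ≤ w.length := by
  induction w with
  | nil => simp [eval, numInv_id]
  | cons i w ih =>
    have := numInv_sortAt_le (n := n) (by omega : (i : ℕ) + 1 < n) (eval w)
    simp only [eval_cons, List.length_cons]
    omega

theorem isReduced_cons_iff {i : Fin (n - 1)} {w : List (Fin (n - 1))} :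
    IsReduced (i :: w) ↔ IsReduced w ∧ ¬IsDescent i (eval w) := by
  have hw := numInv_eval_le w
  unfold IsReduced
  by_cases h : IsDescent i (eval w)
  · rw [eval_cons, sortAt_of_isDescent h, List.length_cons]
    simp only [h, not_true_eq_false, and_false, iff_false]
    omega
  · rw [eval_cons, numInv_sortAt_of_not_isDescent (n := n) (by omega) h, List.length_cons]
    simp only [h, not_false_eq_true, and_true]
    omega

theorem IsReduced.of_heckeEquiv {u w : List (Fin (n - 1))} (hu : IsReduced u)
    (h : HeckeEquiv n u w) (hl : w.length = u.length) : IsReduced w := by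
  rw [IsReduced, hl, hu, h.eval_eq]

theorem IsReduced.exists_heckeEquiv_cons {u : List (Fin (n - 1))} (hu : IsReduced u)
    {t : Fin (n - 1)} (ht : IsDescent t (eval u)) :
    ∃ u', HeckeEquiv n u (t :: u') ∧ u'.length + 1 = u.length := by
  induction hN : u.length using Nat.strong_induction_on generalizing u t with
  | _ N ih =>
  cases u with
  | nil => exact absurd ht (by simp [IsDescent, eval])
  | cons s v =>
    obtain ⟨hv, hs⟩ := isReduced_cons_iff.1 hu
    rw [eval_cons] at ht
    replace hN : v.length + 1 = N := hN
    obtain rfl | hts := eq_or_ne t s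
    · exact ⟨v, .refl _, hN⟩
    by_cases hadj : (s : ℕ) + 1 = t ∨ (t : ℕ) + 1 = s
    · -- `v ≡ t v'` and then `v' ≡ s v''`, so the braid relation gives `s v ≡ t s t v''`
      obtain ⟨v', hvv', hv'⟩ := ih _ (by omega) hv (ht.of_sortAt_of_adj hadj hs) rfl
      obtain ⟨hv'red, htv'⟩ := isReduced_cons_iff.1 (hv.of_heckeEquiv hvv' (by simp [hv']))
      rw [hvv'.eval_eq, eval_cons] at hs ht
      obtain ⟨v'', hv'v'', hv''⟩ :=
        ih _ (by omega) hv'red (ht.of_sortAt_sortAt_of_adj hadj htv' hs) rfl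
      refine ⟨s :: t :: v'', ?_, by simp only [List.length_cons]; omega⟩
      exact ((hvv'.trans (hv'v''.cons t)).cons s).trans (.rel _ _ (.braid [] v'' s t hadj))
    · have hfar : (s : ℕ) + 1 < t ∨ (t : ℕ) + 1 < s := by
        have := Fin.val_ne_of_ne hts
        omega
      obtain ⟨v', hvv', hv'⟩ :=
        ih _ (by omega) hv ((isDescent_sortAt_iff_of_far hfar _).1 ht) rfl
      refine ⟨s :: v', ?_, by simp only [List.length_cons]; omega⟩
      exact (hvv'.cons s).trans (.rel _ _ (.comm [] v' s t hfar))

theorem IsReduced.cons_heckeEquiv {r : List (Fin (n - 1))} (hr : IsReduced r)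
    {t : Fin (n - 1)} (ht : IsDescent t (eval r)) : HeckeEquiv n (t :: r) r := by
  obtain ⟨r', hrr', -⟩ := hr.exists_heckeEquiv_cons ht
  exact ((hrr'.cons t).trans (.rel _ _ (.shorten [] r' t))).trans hrr'.symm

theorem exists_isReduced_heckeEquiv (w : List (Fin (n - 1))) :
    ∃ r, HeckeEquiv n w r ∧ IsReduced r := by
  induction w with
  | nil => exact ⟨[], .refl _, by simp [IsReduced, eval, numInv_id]⟩
  | cons s v ih =>
    obtain ⟨r, hvr, hr⟩ := ih
    by_cases hs : IsDescent s (eval r)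
    · exact ⟨r, (hvr.cons s).trans (hr.cons_heckeEquiv hs), hr⟩
    · exact ⟨s :: r, hvr.cons s, isReduced_cons_iff.2 ⟨hr, hs⟩⟩

theorem cons_heckeEquiv_of_isDescent {w : List (Fin (n - 1))} {t : Fin (n - 1)}
    (ht : IsDescent t (eval w)) : HeckeEquiv n (t :: w) w := by
  obtain ⟨r, hwr, hr⟩ := exists_isReduced_heckeEquiv w
  rw [hwr.eval_eq] at ht
  exact (hwr.cons t).trans ((hr.cons_heckeEquiv ht).trans hwr.symm)

theorem heckeLen_eq_numInv (w : List (Fin (n - 1))) : heckeLen n w = numInv n (eval w) := by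
  obtain ⟨r, hwr, hr⟩ := exists_isReduced_heckeEquiv w
  refine IsLeast.csInf_eq ⟨⟨r, hwr, by rw [hr, hwr.eval_eq]⟩, ?_⟩
  rintro _ ⟨w', hww', rfl⟩
  exact hww'.eval_eq ▸ numInv_eval_le w'

theorem _root_.HeckeEquiv.heckeLen_eq {w w' : List (Fin (n - 1))} (h : HeckeEquiv n w w') :
    heckeLen n w = heckeLen n w' := by
  rw [heckeLen_eq_numInv, heckeLen_eq_numInv, h.eval_eq]

end ZeroHecke

/-- Exchange-type property for the 0-Hecke monoid `H_n`: for any element `m` (given by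
a word `w`) and any generator `t`, exactly one of the following holds:
`ℓ(t·m) = ℓ(m) + 1`, or `t·m = m`. -/
theorem hecke_exchange (n : ℕ) (w : List (Fin (n - 1))) (t : Fin (n - 1)) :
    Xor' (heckeLen n (t :: w) = heckeLen n w + 1) (HeckeEquiv n (t :: w) w) := by
  by_cases ht : IsDescent t (eval w)
  · have h := cons_heckeEquiv_of_isDescent ht
    exact .inr ⟨h, by rw [h.heckeLen_eq]; omega⟩
  · have h : heckeLen n (t :: w) = heckeLen n w + 1 := by
      rw [heckeLen_eq_numInv, heckeLen_eq_numInv, eval_cons,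
        numInv_sortAt_of_not_isDescent (by omega) ht]
    exact .inl ⟨h, fun h' => by rw [h'.heckeLen_eq] at h; omega⟩
end
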